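/- arXiv:0906.2902 — 5 statements merged into one kernel-verified Lean document; each statement's English description precedes it below -/
import Mathlib

section
/- Let A be a positive self-adjoint operator on L²(X,μ) with F(λ) = ‖χ_A([0,λ])‖_{1,∞} finite. Then every nonzero f ∈ L²(X) satisfies the generalized L² Moser inequality ∫_X |f(x)|² F^{-1}(|f(x)|²/(4‖f‖₂²)) dμ ≤ 4 E(f), where F^{-1}(y) = 0 if y < F(0) and F^{-1}(y) = sup{λ : F(λ) ≤ y} otherwise. -/
open MeasureTheory Set
open scoped ENNReal InnerProductSpace

variable {X : Type*} [MeasurableSpace X]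

/-- The `L¹ → L^∞` operator norm of an operator on `L²`, computed on `L¹ ∩ L²`. -/
noncomputable def opNorm1infty (μ : Measure X) (T : Lp ℝ 2 μ →L[ℝ] Lp ℝ 2 μ) : ℝ≥0∞ :=
  ⨆ (f : Lp ℝ 2 μ) (_ : eLpNorm (⇑f) 1 μ ≤ 1), eLpNorm (⇑(T f)) ⊤ μ

/-!
Let `P = χ_A([0,λ])` with `‖P‖_{1→∞} ≤ t`, and let `u = f 1_{f² ≥ 4‖f‖² t}`. Then
`‖Pu‖₂² = ⟪u, Pu⟫ ≤ t ‖u‖₁²` and `‖u‖₁ ≤ ‖u‖₂² / (2‖f‖√t)`, so `⟪Pu, f⟫ ≤ ‖u‖₂² / 2`, and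
`‖u‖₂² = ⟪u, f - Pf⟫ + ⟪Pu, f⟫` yields `∫_{f² ≥ 4‖f‖² t} f² dμ ≤ 4‖f - Pf‖² = 4 ν_f((λ, ∞))`.
Taking `λ` with `F λ ≤ t` and integrating over the level sets of `F⁻¹` (layer cake for the law
of `f² / (4‖f‖²)` under `f² dμ`) bounds the left side by `4 ∫_0^∞ ν_f((λ, ∞)) dλ = 4 E(f)`.
-/

section Layercake

variable {α : Type*} [MeasurableSpace α]

theorem volume_ofReal_lt_inter_Ioi (a : ℝ≥0∞) :
    volume ({t : ℝ | ENNReal.ofReal t < a} ∩ Ioi 0) = a := by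
  rcases eq_or_ne a ⊤ with rfl | ha
  · simp
  · have : {t : ℝ | ENNReal.ofReal t < a} ∩ Ioi 0 = Ioo 0 a.toReal := by
      ext t
      simp only [mem_inter_iff, mem_Ioi, mem_ofPred_eq, mem_Ioo]
      exact ⟨fun ⟨h, ht⟩ => ⟨ht, (ENNReal.ofReal_lt_iff_lt_toReal ht.le ha).1 h⟩,
        fun ⟨ht, h⟩ => ⟨(ENNReal.ofReal_lt_iff_lt_toReal ht.le ha).2 h, ht⟩⟩
    rw [this, Real.volume_Ioo, sub_zero, ENNReal.ofReal_toReal ha]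

theorem lintegral_eq_lintegral_meas_ofReal_lt (μ : Measure α) [SFinite μ] {g : α → ℝ≥0∞}
    (hg : Measurable g) :
    ∫⁻ a, g a ∂μ = ∫⁻ t in Ioi 0, μ {a | ENNReal.ofReal t < g a} := by
  set S : Set (α × ℝ) := {p | ENNReal.ofReal p.2 < g p.1}
  have hS : MeasurableSet S :=
    measurableSet_lt (ENNReal.measurable_ofReal.comp measurable_snd) (hg.comp measurable_fst)
  have hslice (a : α) : ∫⁻ t in Ioi 0, S.indicator 1 (a, t) = g a := by
    rw [← volume_ofReal_lt_inter_Ioi (g a), ← Measure.restrict_apply' measurableSet_Ioi,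
      ← lintegral_indicator_one (measurableSet_lt ENNReal.measurable_ofReal measurable_const)]
    rfl
  calc ∫⁻ a, g a ∂μ = ∫⁻ a, (∫⁻ t in Ioi 0, S.indicator 1 (a, t)) ∂μ := by simp_rw [hslice]
    _ = ∫⁻ t in Ioi 0, ∫⁻ a, S.indicator 1 (a, t) ∂μ :=
      lintegral_lintegral_swap (f := fun a t => S.indicator 1 (a, t))
        (measurable_one.indicator hS).aemeasurable
    _ = ∫⁻ t in Ioi 0, μ {a | ENNReal.ofReal t < g a} := by
      refine lintegral_congr fun t => ?_
      rw [← lintegral_indicator_one (measurableSet_lt measurable_const hg)]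
      rfl

theorem lintegral_measure_Ioi_eq_ofReal_integral {ν : Measure ℝ} (h0 : ν (Iio 0) = 0)
    (hint : Integrable (fun x => x) ν) :
    ∫⁻ t in Ioi 0, ν (Ioi t) = ENNReal.ofReal (∫ x, x ∂ν) := by
  have hnn : 0 ≤ᵐ[ν] fun x => x := measure_mono_null (fun x (hx : ¬ 0 ≤ x) => not_le.1 hx) h0
  rw [ofReal_integral_eq_lintegral_ofReal hint hnn,
    lintegral_eq_lintegral_meas_lt ν hnn aemeasurable_id']
  rfl

end Layercake

theorem measure_le_of_forall_measure_Ici_le {α : Type*} [LinearOrder α] [TopologicalSpace α]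
    [ClosedIicTopology α] [MeasurableSpace α] (ρ : Measure α) [ρ.InnerRegularCompactLTTop]
    [IsFiniteMeasure ρ] {S : Set α} (hS : MeasurableSet S) {C : ℝ≥0∞}
    (h : ∀ t ∈ S, ρ (Ici t) ≤ C) : ρ S ≤ C := by
  rw [hS.measure_eq_iSup_isCompact_of_ne_top (measure_ne_top ρ S)]
  refine iSup₂_le fun K hKS => iSup_le fun hK => ?_
  rcases K.eq_empty_or_nonempty with rfl | hne
  · simp
  · obtain ⟨t, htK, hleast⟩ := hK.exists_isLeast hne
    exact (measure_mono hleast).trans (h t (hKS htK))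

theorem measure_le_of_forall_pos_measure_Ici_le (ρ : Measure ℝ) [IsFiniteMeasure ρ]
    (h0 : ρ (Iic 0) = 0) {S : Set ℝ} (hS : MeasurableSet S) {C : ℝ≥0∞}
    (h : ∀ t ∈ S, 0 < t → ρ (Ici t) ≤ C) : ρ S ≤ C :=
  calc ρ S ≤ ρ (S ∩ Ioi 0) + ρ (S \ Ioi 0) := measure_le_inter_add_sdiff ρ S (Ioi 0)
    _ ≤ C + 0 := by
      gcongr
      · exact measure_le_of_forall_measure_Ici_le ρ (hS.inter measurableSet_Ioi)
          fun t ht => h t ht.1 ht.2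
      · exact (measure_mono fun t ht => not_lt.1 (mem_Ioi.not.1 ht.2)).trans h0.le
    _ = C := add_zero C

/-- The right-continuous inverse `F⁻¹` of `F`, completed by `0` below `F 0`. -/
noncomputable def completedInverse (F : ℝ → ℝ) (y : ℝ) : ℝ≥0∞ :=
  if y < F 0 then 0 else sSup ((fun l => ENNReal.ofReal l) '' {l | 0 ≤ l ∧ F l ≤ y})

theorem completedInverse_mono (F : ℝ → ℝ) : Monotone (completedInverse F) := by
  intro a b hab
  unfold completedInverse
  split_ifs with ha hb hb
  · exact le_rfl
  · exact zero_le
  · exact absurd (hab.trans_lt hb) ha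
  · exact sSup_le_sSup (image_mono fun l hl => ⟨hl.1, hl.2.trans hab⟩)

theorem exists_lt_of_ofReal_lt_completedInverse {F : ℝ → ℝ} {l y : ℝ}
    (h : ENNReal.ofReal l < completedInverse F y) : ∃ l', 0 ≤ l' ∧ F l' ≤ y ∧ l < l' := by
  unfold completedInverse at h
  split_ifs at h
  · exact absurd h not_lt_zero
  · obtain ⟨_, ⟨l', hl', rfl⟩, hll'⟩ := lt_sSup_iff.1 h
    exact ⟨l', hl'.1, hl'.2, (ENNReal.ofReal_lt_ofReal_iff'.1 hll').1⟩

section SymmetricProjection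

variable {E : Type*} [NormedAddCommGroup E] [InnerProductSpace ℝ E] {P : E →ₗ[ℝ] E}

theorem LinearMap.IsSymmetricProjection.norm_sq_apply (hP : P.IsSymmetricProjection) (x : E) :
    ‖P x‖ ^ 2 = ⟪x, P x⟫_ℝ := by
  rw [← real_inner_self_eq_norm_sq, hP.isSymmetric, ← Module.End.mul_apply,
    hP.isIdempotentElem.eq]

theorem LinearMap.IsSymmetricProjection.norm_sq_eq_add (hP : P.IsSymmetricProjection) (x : E) :
    ‖x‖ ^ 2 = ‖P x‖ ^ 2 + ‖x - P x‖ ^ 2 := by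
  have horth : ⟪P x, x - P x⟫_ℝ = 0 := by
    rw [inner_sub_right, real_inner_comm, ← hP.norm_sq_apply, real_inner_self_eq_norm_sq,
      sub_self]
  have h := norm_add_sq_real (P x) (x - P x)
  rwa [horth, mul_zero, add_zero, add_sub_cancel] at h

theorem norm_le_two_mul_norm_sub_apply (hP : P.IsSymmetric) {u f : E}
    (hu : ⟪u, f⟫_ℝ = ‖u‖ ^ 2) (hPu : 2 * ‖P u‖ * ‖f‖ ≤ ‖u‖ ^ 2) :
    ‖u‖ ≤ 2 * ‖f - P f‖ := by
  have h : ‖u‖ ^ 2 ≤ ‖u‖ * ‖f - P f‖ + ‖P u‖ * ‖f‖ :=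
    calc ‖u‖ ^ 2 = ⟪u, f - P f⟫_ℝ + ⟪P u, f⟫_ℝ := by rw [inner_sub_right, hP]; linarith
      _ ≤ ‖u‖ * ‖f - P f‖ + ‖P u‖ * ‖f‖ :=
        add_le_add (real_inner_le_norm _ _) (real_inner_le_norm _ _)
  nlinarith [norm_nonneg u, norm_nonneg (f - P f)]

theorem LinearMap.IsSymmetricProjection.measure_Ioi_eq (hP : P.IsSymmetricProjection)
    {ν : Measure ℝ} {x : E} {l : ℝ} (hl : ν (Iic l) = ENNReal.ofReal ⟪P x, x⟫_ℝ)
    (htot : ν univ = ENNReal.ofReal (‖x‖ ^ 2)) :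
    ν (Ioi l) = ENNReal.ofReal (‖x - P x‖ ^ 2) := by
  have hsplit : ν (Iic l ∪ Ioi l) = ν (Iic l) + ν (Ioi l) :=
    measure_union (Iic_disjoint_Ioi le_rfl) measurableSet_Ioi
  rw [Iic_union_Ioi, htot, hP.norm_sq_eq_add x, hl, real_inner_comm, ← hP.norm_sq_apply,
    ENNReal.ofReal_add (sq_nonneg _) (sq_nonneg _)] at hsplit
  exact ((ENNReal.add_right_inj ENNReal.ofReal_ne_top).1 hsplit).symm

end SymmetricProjection

namespace MeasureTheory.Lp

variable {μ : Measure X}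

theorem inner_eq_integral_mul (u v : Lp ℝ 2 μ) : ⟪u, v⟫_ℝ = ∫ x, u x * v x ∂μ := by
  simp [L2.inner_def, mul_comm]

theorem norm_sq_eq_integral_sq (u : Lp ℝ 2 μ) : ‖u‖ ^ 2 = ∫ x, u x ^ 2 ∂μ := by
  rw [← real_inner_self_eq_norm_sq, inner_eq_integral_mul]
  simp only [sq]

theorem ofReal_norm_sq_eq_lintegral (u : Lp ℝ 2 μ) :
    ENNReal.ofReal (‖u‖ ^ 2) = ∫⁻ x, ENNReal.ofReal (u x ^ 2) ∂μ := by
  rw [norm_sq_eq_integral_sq, ofReal_integral_eq_lintegral_ofReal (Lp.memLp u).integrable_sq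
    (ae_of_all _ fun _ => sq_nonneg _)]

theorem enorm_inner_le_eLpNorm_one_mul_top (u v : Lp ℝ 2 μ) :
    ‖⟪u, v⟫_ℝ‖ₑ ≤ eLpNorm u 1 μ * eLpNorm v ⊤ μ := by
  rw [inner_eq_integral_mul]
  calc ‖∫ x, u x * v x ∂μ‖ₑ ≤ eLpNorm (fun x => u x * v x) 1 μ := by
        rw [eLpNorm_one_eq_lintegral_enorm]; exact enorm_integral_le_lintegral_enorm _
    _ ≤ eLpNorm u 1 μ * eLpNorm v ⊤ μ := by
      simpa using eLpNorm_le_eLpNorm_mul_eLpNorm_top 1 (Lp.aestronglyMeasurable u) v (· * ·) 1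
        (ae_of_all _ fun x => by simp [nnnorm_mul])

theorem eLpNorm_smul (c : ℝ) (u : Lp ℝ 2 μ) (q : ℝ≥0∞) :
    eLpNorm (c • u) q μ = ‖c‖ₑ * eLpNorm u q μ := by
  rw [eLpNorm_congr_ae (Lp.coeFn_smul c u), eLpNorm_const_smul]

theorem eLpNorm_top_apply_le_opNorm1infty_mul (T : Lp ℝ 2 μ →L[ℝ] Lp ℝ 2 μ) {u : Lp ℝ 2 μ}
    (hu : eLpNorm u 1 μ ≠ ⊤) :
    eLpNorm (T u) ⊤ μ ≤ opNorm1infty μ T * eLpNorm u 1 μ := by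
  rcases eq_or_ne (eLpNorm u 1 μ) 0 with h0 | h0
  · have : u = 0 := Lp.eq_zero_iff_ae_eq_zero.2
      ((eLpNorm_eq_zero_iff (Lp.aestronglyMeasurable u) one_ne_zero).1 h0)
    rw [this, map_zero, eLpNorm_congr_ae (Lp.coeFn_zero ℝ 2 μ), eLpNorm_zero]
    exact zero_le
  · set r := (eLpNorm u 1 μ).toReal
    have hr : 0 < r := ENNReal.toReal_pos h0 hu
    have hru : ‖r‖ₑ = eLpNorm u 1 μ := by
      rw [Real.enorm_eq_ofReal hr.le, ENNReal.ofReal_toReal hu]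
    have hunit : eLpNorm (r⁻¹ • u) 1 μ ≤ 1 := by
      rw [eLpNorm_smul, enorm_inv hr.ne', hru, ENNReal.inv_mul_cancel h0 hu]
    calc eLpNorm (T u) ⊤ μ = ‖r‖ₑ * eLpNorm (T (r⁻¹ • u)) ⊤ μ := by
          rw [map_smul, eLpNorm_smul, ← mul_assoc, ← enorm_mul, mul_inv_cancel₀ hr.ne',
            enorm_one, one_mul]
      _ ≤ eLpNorm u 1 μ * opNorm1infty μ T := by
          rw [hru]
          have hle : eLpNorm (T (r⁻¹ • u)) ⊤ μ ≤ opNorm1infty μ T :=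
            le_iSup₂_of_le (r⁻¹ • u) hunit le_rfl
          exact mul_le_mul_right hle _
      _ = opNorm1infty μ T * eLpNorm u 1 μ := mul_comm _ _

end MeasureTheory.Lp

section TruncationBound

variable {μ : Measure X}

theorem norm_apply_le_of_opNorm1infty_le {P : Lp ℝ 2 μ →L[ℝ] Lp ℝ 2 μ}
    (hP : (P : Lp ℝ 2 μ →ₗ[ℝ] Lp ℝ 2 μ).IsSymmetricProjection) {t : ℝ} (ht : 0 ≤ t)
    (hPt : opNorm1infty μ P ≤ ENNReal.ofReal t) {u : Lp ℝ 2 μ} (hu : eLpNorm u 1 μ ≠ ⊤) :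
    ‖P u‖ ≤ √t * (eLpNorm u 1 μ).toReal := by
  set e := eLpNorm u 1 μ
  have hsq : ENNReal.ofReal (‖P u‖ ^ 2) ≤ ENNReal.ofReal (t * e.toReal ^ 2) :=
    calc ENNReal.ofReal (‖P u‖ ^ 2) ≤ ‖⟪u, P u⟫_ℝ‖ₑ := by
          have h : ‖P u‖ ^ 2 = ⟪u, P u⟫_ℝ := hP.norm_sq_apply u
          rw [Real.enorm_eq_ofReal_abs, h]
          exact ENNReal.ofReal_le_ofReal (le_abs_self _)
      _ ≤ e * eLpNorm (P u) ⊤ μ := Lp.enorm_inner_le_eLpNorm_one_mul_top u (P u)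
      _ ≤ e * (ENNReal.ofReal t * e) := by
          grw [Lp.eLpNorm_top_apply_le_opNorm1infty_mul P hu, hPt]
      _ = ENNReal.ofReal (t * e.toReal ^ 2) := by
          rw [ENNReal.ofReal_mul ht, ENNReal.ofReal_pow ENNReal.toReal_nonneg,
            ENNReal.ofReal_toReal hu]
          ring
  rw [← pow_le_pow_iff_left₀ (norm_nonneg _) (by positivity) two_ne_zero, mul_pow,
    Real.sq_sqrt ht]
  exact (ENNReal.ofReal_le_ofReal_iff (by positivity)).1 hsq

theorem eLpNorm_one_le_norm_sq_div {u : Lp ℝ 2 μ} {s : ℝ} (hs : 0 < s)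
    (h : ∀ᵐ x ∂μ, u x = 0 ∨ s ≤ |u x|) : eLpNorm u 1 μ ≤ ENNReal.ofReal (‖u‖ ^ 2 / s) := by
  rw [eLpNorm_one_eq_lintegral_enorm, Lp.norm_sq_eq_integral_sq, ← integral_div,
    ofReal_integral_eq_lintegral_ofReal ((Lp.memLp u).integrable_sq.div_const s)
      (ae_of_all _ fun _ => by positivity)]
  refine lintegral_mono_ae ?_
  filter_upwards [h] with x hx
  rw [Real.enorm_eq_ofReal_abs]
  refine ENNReal.ofReal_le_ofReal ?_
  rcases hx with h0 | hsx
  · simp [h0]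
  · rw [le_div_iff₀ hs, ← sq_abs]
    nlinarith [abs_nonneg (u x)]

variable {f u : Lp ℝ 2 μ} {A : Set X}

theorem inner_eq_norm_sq_of_ae_eq_indicator (hu : u =ᵐ[μ] A.indicator f) :
    ⟪u, f⟫_ℝ = ‖u‖ ^ 2 := by
  rw [Lp.inner_eq_integral_mul, Lp.norm_sq_eq_integral_sq]
  refine integral_congr_ae ?_
  filter_upwards [hu] with x hx
  rw [hx]
  by_cases hxA : x ∈ A <;> simp [hxA, sq]

theorem ofReal_norm_sq_eq_setLIntegral_of_ae_eq_indicator (hA : MeasurableSet A)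
    (hu : u =ᵐ[μ] A.indicator f) :
    ENNReal.ofReal (‖u‖ ^ 2) = ∫⁻ x in A, ENNReal.ofReal (f x ^ 2) ∂μ := by
  rw [Lp.ofReal_norm_sq_eq_lintegral, ← lintegral_indicator hA]
  refine lintegral_congr_ae ?_
  filter_upwards [hu] with x hx
  rw [hx]
  by_cases hxA : x ∈ A <;> simp [hxA]

theorem setLIntegral_sq_le_four_mul_norm_sub_sq {P : Lp ℝ 2 μ →L[ℝ] Lp ℝ 2 μ}
    (hP : (P : Lp ℝ 2 μ →ₗ[ℝ] Lp ℝ 2 μ).IsSymmetricProjection) {t : ℝ} (ht : 0 < t)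
    (hPt : opNorm1infty μ P ≤ ENNReal.ofReal t) (hf : f ≠ 0) :
    ∫⁻ x in {x | t ≤ f x ^ 2 / (4 * ‖f‖ ^ 2)}, ENNReal.ofReal (f x ^ 2) ∂μ
      ≤ ENNReal.ofReal (4 * ‖f - P f‖ ^ 2) := by
  set A := {x | t ≤ f x ^ 2 / (4 * ‖f‖ ^ 2)}
  have hA : MeasurableSet A := measurableSet_le measurable_const
    (((Lp.stronglyMeasurable f).measurable.pow_const 2).div_const _)
  have hf_pos : 0 < ‖f‖ := norm_pos_iff.2 hf
  set s := 2 * ‖f‖ * √t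
  have hs : 0 < s := by positivity
  set u := ((Lp.memLp f).indicator hA).toLp
  have hu : u =ᵐ[μ] A.indicator f := MemLp.coeFn_toLp _
  have hlarge : ∀ᵐ x ∂μ, u x = 0 ∨ s ≤ |u x| := by
    filter_upwards [hu] with x hx
    by_cases hxA : x ∈ A
    · have hfx : 4 * ‖f‖ ^ 2 * t ≤ f x ^ 2 := by
        rw [mul_comm]; exact (le_div_iff₀ (by positivity)).1 hxA
      right
      rw [hx, indicator_of_mem hxA, ← pow_le_pow_iff_left₀ hs.le (abs_nonneg _) two_ne_zero,
        sq_abs, mul_pow, mul_pow, Real.sq_sqrt ht.le]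
      linarith
    · left
      rw [hx, indicator_of_notMem hxA]
  have he := eLpNorm_one_le_norm_sq_div hs hlarge
  have hPu : 2 * ‖P u‖ * ‖f‖ ≤ ‖u‖ ^ 2 :=
    calc 2 * ‖P u‖ * ‖f‖ ≤ 2 * (√t * (eLpNorm u 1 μ).toReal) * ‖f‖ := by
          gcongr
          exact norm_apply_le_of_opNorm1infty_le hP ht.le hPt
            (ne_top_of_le_ne_top ENNReal.ofReal_ne_top he)
      _ = s * (eLpNorm u 1 μ).toReal := by ring
      _ ≤ ‖u‖ ^ 2 := (le_div_iff₀' hs).1 (ENNReal.toReal_le_of_le_ofReal (by positivity) he)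
  have hu_le : ‖u‖ ≤ 2 * ‖f - P f‖ :=
    norm_le_two_mul_norm_sub_apply hP.isSymmetric (inner_eq_norm_sq_of_ae_eq_indicator hu) hPu
  rw [← ofReal_norm_sq_eq_setLIntegral_of_ae_eq_indicator hA hu]
  exact ENNReal.ofReal_le_ofReal (by nlinarith [norm_nonneg u])

end TruncationBound

noncomputable def normalizedSqDistribution (μ : Measure X) (f : Lp ℝ 2 μ) : Measure ℝ :=
  (μ.withDensity fun x => ENNReal.ofReal (f x ^ 2)).map fun x => f x ^ 2 / (4 * ‖f‖ ^ 2)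

section NormalizedSqDistribution

variable {μ : Measure X}

theorem measurable_normalizedSq (f : Lp ℝ 2 μ) : Measurable fun x => f x ^ 2 / (4 * ‖f‖ ^ 2) :=
  ((Lp.stronglyMeasurable f).measurable.pow_const 2).div_const _

instance (f : Lp ℝ 2 μ) : IsFiniteMeasure (normalizedSqDistribution μ f) :=
  have := isFiniteMeasure_withDensity_ofReal (Lp.memLp f).integrable_sq.2
  Measure.isFiniteMeasure_map _ _

theorem lintegral_normalizedSqDistribution (f : Lp ℝ 2 μ) {g : ℝ → ℝ≥0∞} (hg : Measurable g) :
    ∫⁻ t, g t ∂normalizedSqDistribution μ f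
      = ∫⁻ x, ENNReal.ofReal (f x ^ 2) * g (f x ^ 2 / (4 * ‖f‖ ^ 2)) ∂μ := by
  rw [normalizedSqDistribution, lintegral_map hg (measurable_normalizedSq f)]
  exact lintegral_withDensity_eq_lintegral_mul _
    (ENNReal.measurable_ofReal.comp ((Lp.stronglyMeasurable f).measurable.pow_const 2))
    (hg.comp (measurable_normalizedSq f))

theorem normalizedSqDistribution_Ici (f : Lp ℝ 2 μ) (t : ℝ) :
    normalizedSqDistribution μ f (Ici t)
      = ∫⁻ x in {x | t ≤ f x ^ 2 / (4 * ‖f‖ ^ 2)}, ENNReal.ofReal (f x ^ 2) ∂μ := by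
  rw [normalizedSqDistribution, Measure.map_apply (measurable_normalizedSq f) measurableSet_Ici,
    withDensity_apply _ (measurable_normalizedSq f measurableSet_Ici)]
  rfl

theorem normalizedSqDistribution_Iic_zero {f : Lp ℝ 2 μ} (hf : f ≠ 0) :
    normalizedSqDistribution μ f (Iic 0) = 0 := by
  have hc : 0 < 4 * ‖f‖ ^ 2 := by positivity
  have hZ := measurable_normalizedSq f (measurableSet_Iic (a := (0 : ℝ)))
  rw [normalizedSqDistribution, Measure.map_apply (measurable_normalizedSq f) measurableSet_Iic,
    withDensity_apply _ hZ, setLIntegral_congr_fun hZ (g := fun _ => 0) fun x hx => ?_,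
    lintegral_zero]
  exact ENNReal.ofReal_eq_zero.2 (by simpa [div_nonpos_iff, hc.not_ge, hc.le] using hx)

end NormalizedSqDistribution

/-- `Pr l` plays the spectral projection `χ_A([0,l])` and `ν g` the spectral measure of `g`. -/
theorem stmt_9_general (μ : Measure X)
    (Pr : ℝ → (Lp ℝ 2 μ →L[ℝ] Lp ℝ 2 μ))
    (hproj : ∀ l, Pr l ∘L Pr l = Pr l)
    (hsymm : ∀ l f g, ⟪Pr l f, g⟫_ℝ = ⟪f, Pr l g⟫_ℝ)
    (ν : Lp ℝ 2 μ → Measure ℝ)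
    (hν0 : ∀ g, ν g (Set.Iio 0) = 0)
    (hν : ∀ g, ∀ l ≥ (0 : ℝ), ν g (Set.Iic l) = ENNReal.ofReal ⟪Pr l g, g⟫_ℝ)
    (hνtot : ∀ g, ν g Set.univ = ENNReal.ofReal (‖g‖ ^ 2))
    (F : ℝ → ℝ)
    (hF : ∀ l ≥ (0 : ℝ), opNorm1infty μ (Pr l) = ENNReal.ofReal (F l))
    (Finv : ℝ → ℝ≥0∞)
    (hFinv : ∀ y, Finv y = if y < F 0 then 0
      else sSup ((fun l => ENNReal.ofReal l) '' {l | 0 ≤ l ∧ F l ≤ y}))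
    (f : Lp ℝ 2 μ) (hf : f ≠ 0)
    (E : ℝ) (hEfin : Integrable (fun x => x) (ν f)) (hE : E = ∫ x, x ∂(ν f)) :
    ∫⁻ x, ENNReal.ofReal ((f : X → ℝ) x ^ 2)
        * Finv ((f : X → ℝ) x ^ 2 / (4 * ‖f‖ ^ 2)) ∂μ
      ≤ ENNReal.ofReal (4 * E) := by
  have hP (l : ℝ) : (Pr l : Lp ℝ 2 μ →ₗ[ℝ] Lp ℝ 2 μ).IsSymmetricProjection :=
    ⟨congrArg ContinuousLinearMap.toLinearMap (hproj l), hsymm l⟩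
  obtain rfl : Finv = completedInverse F := funext hFinv
  have hFinv_meas := (completedInverse_mono F).measurable
  set ρ := normalizedSqDistribution μ f
  have hlevel (l : ℝ) :
      ρ {t | ENNReal.ofReal l < completedInverse F t} ≤ 4 * ν f (Ioi l) := by
    refine measure_le_of_forall_pos_measure_Ici_le ρ (normalizedSqDistribution_Iic_zero hf)
      (measurableSet_lt measurable_const hFinv_meas) fun t ht ht_pos => ?_
    obtain ⟨l', hl', hFl', hll'⟩ := exists_lt_of_ofReal_lt_completedInverse ht
    calc ρ (Ici t) ≤ ENNReal.ofReal (4 * ‖f - Pr l' f‖ ^ 2) := by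
          rw [normalizedSqDistribution_Ici]
          exact setLIntegral_sq_le_four_mul_norm_sub_sq (hP l') ht_pos
            ((hF l' hl').trans_le (ENNReal.ofReal_le_ofReal hFl')) hf
      _ = 4 * ν f (Ioi l') := by
          rw [(hP l').measure_Ioi_eq (hν f l' hl') (hνtot f), ENNReal.ofReal_mul zero_le_four,
            ENNReal.ofReal_ofNat]
          rfl
      _ ≤ 4 * ν f (Ioi l) := by gcongr
  calc _ = ∫⁻ t, completedInverse F t ∂ρ := (lintegral_normalizedSqDistribution f hFinv_meas).symm
    _ = ∫⁻ l in Ioi 0, ρ {t | ENNReal.ofReal l < completedInverse F t} :=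
      lintegral_eq_lintegral_meas_ofReal_lt ρ hFinv_meas
    _ ≤ ∫⁻ l in Ioi 0, 4 * ν f (Ioi l) := lintegral_mono hlevel
    _ = ENNReal.ofReal (4 * E) := by
      rw [lintegral_const_mul' _ _ ENNReal.ofNat_ne_top,
        lintegral_measure_Ioi_eq_ofReal_integral (hν0 f) hEfin, ← hE,
        ENNReal.ofReal_mul zero_le_four, ENNReal.ofReal_ofNat]

/-- The generalized `L²`-Moser inequality (Theorem 2.2, inequality (31)).
The positive self-adjoint operator `A` on `L²(X,μ)` is encoded by its spectral
projections `Pr l = χ_A([0,l])` and the spectral measures `ν g`, with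
`ν g ([0,l]) = ⟨Π_{[0,l]} g, g⟩`, `ν g (ℝ) = ‖g‖²`, and energy
`E(g) = ∫ x dν_g`.  With `F(λ) = ‖χ_A([0,λ])‖_{1,∞}` finite and its completed
right-continuous inverse `F⁻¹` (equal to `0` below `F(0)` and to
`sup {λ | F λ ≤ y}` otherwise), every nonzero `f ∈ L²` satisfies
`∫_X |f(x)|² F⁻¹(|f(x)|²/(4‖f‖₂²)) dμ ≤ 4 E(f)`. -/
theorem stmt_9 (μ : Measure X)
    (Pr : ℝ → (Lp ℝ 2 μ →L[ℝ] Lp ℝ 2 μ))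
    (hproj : ∀ l, Pr l ∘L Pr l = Pr l)
    (hsymm : ∀ l f g, ⟪Pr l f, g⟫_ℝ = ⟪f, Pr l g⟫_ℝ)
    (hmono : ∀ l l', l ≤ l' → Pr l' ∘L Pr l = Pr l)
    (ν : Lp ℝ 2 μ → Measure ℝ)
    (hν0 : ∀ g, ν g (Set.Iio 0) = 0)
    (hν : ∀ g, ∀ l ≥ (0 : ℝ), ν g (Set.Iic l) = ENNReal.ofReal ⟪Pr l g, g⟫_ℝ)
    (hνtot : ∀ g, ν g Set.univ = ENNReal.ofReal (‖g‖ ^ 2))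
    (F : ℝ → ℝ)
    (hF : ∀ l ≥ (0 : ℝ), opNorm1infty μ (Pr l) = ENNReal.ofReal (F l))
    (Finv : ℝ → ℝ≥0∞)
    (hFinv : ∀ y, Finv y = if y < F 0 then 0
      else sSup ((fun l => ENNReal.ofReal l) '' {l | 0 ≤ l ∧ F l ≤ y}))
    (f : Lp ℝ 2 μ) (hf : f ≠ 0)
    (E : ℝ) (hEfin : Integrable (fun x => x) (ν f)) (hE : E = ∫ x, x ∂(ν f)) :
    ∫⁻ x, ENNReal.ofReal ((f : X → ℝ) x ^ 2)
        * Finv ((f : X → ℝ) x ^ 2 / (4 * ‖f‖ ^ 2)) ∂μ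
      ≤ ENNReal.ofReal (4 * E) :=
  stmt_9_general μ Pr hproj hsymm ν hν0 hν hνtot F hF Finv hFinv f hf E hEfin hE
end

section
/- Let A be a positive self-adjoint operator on L²(X,μ) with F(λ) = ‖χ_A([0,λ])‖_{1,∞} finite. Then every nonzero f ∈ L²(X) ∩ L¹(X) satisfies the Nash-type inequality ‖f‖₂² · F^{-1}(‖f‖₂²/(4‖f‖₁²)) ≤ 8 E(f). -/
/-!
Pairing `χ_A([0,l]) f` with `f` and using Hölder's inequality with exponents `∞, 1` gives
`ν_f([0,l]) = ⟨χ_A([0,l]) f, f⟩ ≤ F(l) ‖f‖₁²`. Hence, when `F(l) ≤ ‖f‖₂² / (4‖f‖₁²)`, at most a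
quarter of the total mass `‖f‖₂²` of the spectral measure `ν_f` lies in `[0,l]`, and Markov's
inequality gives `l · (3/4) ‖f‖₂² ≤ ∫ x dν_f = E(f)`. Taking the supremum over such `l` bounds
`‖f‖₂² F⁻¹(‖f‖₂² / (4‖f‖₁²))` by `(4/3) E(f)`.
-/

open MeasureTheory Set
open scoped ENNReal InnerProductSpace

variable {X : Type*} [MeasurableSpace X]

lemma MeasureTheory.Lp.eq_zero_of_eLpNorm_one_eq_zero {E : Type*} [NormedAddCommGroup E] {p : ℝ≥0∞}
    {μ : Measure X} {f : Lp E p μ} (h : eLpNorm (⇑f) 1 μ = 0) : f = 0 :=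
  Lp.eq_zero_iff_ae_eq_zero.mpr ((eLpNorm_eq_zero_iff (Lp.aestronglyMeasurable f) one_ne_zero).mp h)

lemma ofReal_inner_le_eLpNorm_top_mul_eLpNorm_one (μ : Measure X) (g f : Lp ℝ 2 μ) :
    ENNReal.ofReal ⟪g, f⟫_ℝ ≤ eLpNorm (⇑g) ⊤ μ * eLpNorm (⇑f) 1 μ := by
  calc ENNReal.ofReal ⟪g, f⟫_ℝ = ENNReal.ofReal (∫ x, g x * f x ∂μ) := by
        simp [L2.inner_def, mul_comm]
    _ ≤ ‖∫ x, g x * f x ∂μ‖ₑ := Real.ofReal_le_enorm _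
    _ ≤ ∫⁻ x, ‖g x * f x‖ₑ ∂μ := enorm_integral_le_lintegral_enorm _
    _ = eLpNorm (fun x => g x * f x) 1 μ := eLpNorm_one_eq_lintegral_enorm.symm
    _ ≤ eLpNorm (⇑g) ⊤ μ * eLpNorm (⇑f) 1 μ := by
        simpa using eLpNorm_le_eLpNorm_top_mul_eLpNorm 1 g (Lp.aestronglyMeasurable f)
          (· * ·) 1 (.of_forall fun x => by simp)

lemma eLpNorm_top_apply_le_opNorm1infty_mul (μ : Measure X) (T : Lp ℝ 2 μ →L[ℝ] Lp ℝ 2 μ)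
    (f : Lp ℝ 2 μ) (hf : eLpNorm (⇑f) 1 μ ≠ ⊤) :
    eLpNorm (⇑(T f)) ⊤ μ ≤ opNorm1infty μ T * eLpNorm (⇑f) 1 μ := by
  set N := eLpNorm (⇑f) 1 μ
  rcases eq_or_ne N 0 with hN | hN
  · rw [Lp.eq_zero_of_eLpNorm_one_eq_zero hN, map_zero, eLpNorm_congr_ae (Lp.coeFn_zero ℝ 2 μ),
      eLpNorm_zero]
    exact zero_le
  have hc : ‖N.toReal⁻¹‖ₑ = N⁻¹ := by
    rw [Real.enorm_eq_ofReal (by positivity), ENNReal.ofReal_inv_of_pos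
      (ENNReal.toReal_pos hN hf), ENNReal.ofReal_toReal hf]
  have hnormalized : eLpNorm (⇑(N.toReal⁻¹ • f)) 1 μ ≤ 1 := by
    rw [eLpNorm_congr_ae (Lp.coeFn_smul _ f), eLpNorm_const_smul, hc,
      ENNReal.inv_mul_cancel hN hf]
  have hle : eLpNorm (⇑(T (N.toReal⁻¹ • f))) ⊤ μ ≤ opNorm1infty μ T :=
    le_iSup₂ (f := fun (g : Lp ℝ 2 μ) _ => eLpNorm (⇑(T g)) ⊤ μ) _ hnormalized
  rw [map_smul, eLpNorm_congr_ae (Lp.coeFn_smul _ _), eLpNorm_const_smul, hc,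
    ENNReal.inv_mul_le_iff hN hf] at hle
  rwa [mul_comm]

lemma ofReal_inner_apply_self_le_opNorm1infty_mul_sq (μ : Measure X)
    (T : Lp ℝ 2 μ →L[ℝ] Lp ℝ 2 μ) (f : Lp ℝ 2 μ) (hf : eLpNorm (⇑f) 1 μ ≠ ⊤) :
    ENNReal.ofReal ⟪T f, f⟫_ℝ ≤ opNorm1infty μ T * eLpNorm (⇑f) 1 μ ^ 2 := by
  calc ENNReal.ofReal ⟪T f, f⟫_ℝ ≤ eLpNorm (⇑(T f)) ⊤ μ * eLpNorm (⇑f) 1 μ :=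
        ofReal_inner_le_eLpNorm_top_mul_eLpNorm_one μ _ _
    _ ≤ opNorm1infty μ T * eLpNorm (⇑f) 1 μ * eLpNorm (⇑f) 1 μ := by
        gcongr; exact eLpNorm_top_apply_le_opNorm1infty_mul μ T f hf
    _ = opNorm1infty μ T * eLpNorm (⇑f) 1 μ ^ 2 := by ring

lemma mul_sub_measureReal_Iic_le_integral {ν : Measure ℝ} [IsFiniteMeasure ν]
    (hν : ν (Iio 0) = 0) (hint : Integrable (fun x => x) ν) {l : ℝ} :
    l * (ν.real univ - ν.real (Iic l)) ≤ ∫ x, x ∂ν := by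
  have hnonneg : 0 ≤ᵐ[ν] fun x => x := by
    filter_upwards [measure_eq_zero_iff_ae_notMem.mp hν] with x hx
    simpa using hx
  rcases le_or_gt l 0 with hl | hl
  · exact (mul_nonpos_of_nonpos_of_nonneg hl (sub_nonneg.mpr (measureReal_mono (subset_univ _))))
      |>.trans (integral_nonneg_of_ae hnonneg)
  calc l * (ν.real univ - ν.real (Iic l)) = l * ν.real (Ioi l) := by
        rw [← measureReal_compl measurableSet_Iic, compl_Iic]
    _ ≤ l * ν.real {x | l ≤ x} := 
        mul_le_mul_of_nonneg_left (measureReal_mono fun x (hx : l < x) => hx.le) hl.le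
    _ ≤ ∫ x, x ∂ν := mul_meas_ge_le_integral_of_nonneg hnonneg hint l

/-- The positive self-adjoint operator `A` is encoded by its spectral projections
`Pr l = χ_A([0,l])` and its spectral measures `ν g`, and `E = ∫ x dν_f` is the energy of `f`. -/
theorem stmt_10_general (μ : Measure X)
    (Pr : ℝ → (Lp ℝ 2 μ →L[ℝ] Lp ℝ 2 μ))
    (ν : Lp ℝ 2 μ → Measure ℝ)
    (hν0 : ∀ g, ν g (Set.Iio 0) = 0)
    (hν : ∀ g, ∀ l ≥ (0 : ℝ), ν g (Set.Iic l) = ENNReal.ofReal ⟪Pr l g, g⟫_ℝ)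
    (hνtot : ∀ g, ν g Set.univ = ENNReal.ofReal (‖g‖ ^ 2))
    (F : ℝ → ℝ)
    (hF : ∀ l ≥ (0 : ℝ), opNorm1infty μ (Pr l) = ENNReal.ofReal (F l))
    (Finv : ℝ → ℝ≥0∞)
    (hFinv : ∀ y, Finv y = if y < F 0 then 0
      else sSup ((fun l => ENNReal.ofReal l) '' {l | 0 ≤ l ∧ F l ≤ y}))
    (f : Lp ℝ 2 μ) (hf1 : eLpNorm (⇑f) 1 μ ≠ ⊤)
    (E : ℝ) (hEfin : Integrable (fun x => x) (ν f)) (hE : E = ∫ x, x ∂(ν f)) :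
    ENNReal.ofReal (‖f‖ ^ 2)
        * Finv (‖f‖ ^ 2 / (4 * ((eLpNorm (⇑f) 1 μ).toReal) ^ 2))
      ≤ ENNReal.ofReal (8 * E) := by
  rcases eq_or_ne f 0 with rfl | hf
  · simp
  have : IsFiniteMeasure (ν f) := ⟨by simp [hνtot]⟩
  set N := (eLpNorm (⇑f) 1 μ).toReal
  have hN : 0 < N :=
    ENNReal.toReal_pos (fun h => hf (Lp.eq_zero_of_eLpNorm_one_eq_zero h)) hf1
  rw [hFinv]
  split_ifs
  · simp
  rw [ENNReal.mul_sSup]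
  refine iSup₂_le ?_
  rintro _ ⟨l, ⟨hl, hFl⟩, rfl⟩
  have hmass_Iic : (ν f).real (Iic l) ≤ ‖f‖ ^ 2 / 4 := by
    refine ENNReal.toReal_le_of_le_ofReal (by positivity) ?_
    calc ν f (Iic l) = ENNReal.ofReal ⟪Pr l f, f⟫_ℝ := hν f l hl
      _ ≤ ENNReal.ofReal (F l) * ENNReal.ofReal N ^ 2 := by
          rw [← hF l hl, ENNReal.ofReal_toReal hf1]
          exact ofReal_inner_apply_self_le_opNorm1infty_mul_sq μ (Pr l) f hf1
      _ = ENNReal.ofReal (F l * N ^ 2) := by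
          rw [ENNReal.ofReal_mul' (by positivity), ENNReal.ofReal_pow hN.le]
      _ ≤ ENNReal.ofReal (‖f‖ ^ 2 / 4) := by
          refine ENNReal.ofReal_le_ofReal ?_
          have := (le_div_iff₀ (by positivity)).mp hFl
          linarith
  have hmarkov := mul_sub_measureReal_Iic_le_integral (hν0 f) hEfin (l := l)
  rw [measureReal_def, hνtot, ENNReal.toReal_ofReal (by positivity), ← hE] at hmarkov
  rw [← ENNReal.ofReal_mul (by positivity)]
  refine ENNReal.ofReal_le_ofReal ?_
  nlinarith [mul_nonneg hl (sq_nonneg ‖f‖)]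

/-- The generalized Nash-type inequality (Theorem 2.2, inequality (33)).
The positive self-adjoint operator `A` on `L²(X,μ)` is encoded by its spectral
projections `Pr l = χ_A([0,l])` and the spectral measures `ν g`, with
`ν g ([0,l]) = ⟨Π_{[0,l]} g, g⟩`, `ν g (ℝ) = ‖g‖²`, and energy
`E(g) = ∫ x dν_g`.  With `F(λ) = ‖χ_A([0,λ])‖_{1,∞}` finite and its completed
right-continuous inverse `F⁻¹` (equal to `0` below `F(0)` and to
`sup {λ | F λ ≤ y}` otherwise), every nonzero `f ∈ L²` satisfies
the Nash-type inequality `‖f‖₂² · F⁻¹(‖f‖₂²/(4‖f‖₁²)) ≤ 8 E(f)`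
whenever `f` is a nonzero element of `L² ∩ L¹`. -/
theorem stmt_10 (μ : Measure X)
    (Pr : ℝ → (Lp ℝ 2 μ →L[ℝ] Lp ℝ 2 μ))
    (hproj : ∀ l, Pr l ∘L Pr l = Pr l)
    (hsymm : ∀ l f g, ⟪Pr l f, g⟫_ℝ = ⟪f, Pr l g⟫_ℝ)
    (hmono : ∀ l l', l ≤ l' → Pr l' ∘L Pr l = Pr l)
    (ν : Lp ℝ 2 μ → Measure ℝ)
    (hν0 : ∀ g, ν g (Set.Iio 0) = 0)
    (hν : ∀ g, ∀ l ≥ (0 : ℝ), ν g (Set.Iic l) = ENNReal.ofReal ⟪Pr l g, g⟫_ℝ)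
    (hνtot : ∀ g, ν g Set.univ = ENNReal.ofReal (‖g‖ ^ 2))
    (F : ℝ → ℝ)
    (hF : ∀ l ≥ (0 : ℝ), opNorm1infty μ (Pr l) = ENNReal.ofReal (F l))
    (Finv : ℝ → ℝ≥0∞)
    (hFinv : ∀ y, Finv y = if y < F 0 then 0
      else sSup ((fun l => ENNReal.ofReal l) '' {l | 0 ≤ l ∧ F l ≤ y}))
    (f : Lp ℝ 2 μ) (hf : f ≠ 0) (hf1 : eLpNorm (⇑f) 1 μ ≠ ⊤)
    (E : ℝ) (hEfin : Integrable (fun x => x) (ν f)) (hE : E = ∫ x, x ∂(ν f)) :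
    ENNReal.ofReal (‖f‖ ^ 2)
        * Finv (‖f‖ ^ 2 / (4 * ((eLpNorm (⇑f) 1 μ).toReal) ^ 2))
      ≤ ENNReal.ofReal (8 * E) :=
  stmt_10_general μ Pr ν hν0 hν hνtot F hF Finv hFinv f hf1 E hEfin hE
end

section
/- Let F : (0,∞) → [0,∞) be increasing with F(2λ) ≥ 2(1+ε)F(λ) for some ε > 0 and all small λ, and let G(λ) = λ^{-1}F(λ) + ∫₀^λ u^{-2}F(u)du. Then F(λ) ≤ λG(λ) ≤ (2 + ε^{-1})F(λ) for small λ. -/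
/-!
Write `I(λ) = ∫₀^λ F(u) u⁻² du`, so that `λ G(λ) = F(λ) + λ I(λ)` and the lower bound is `I ≥ 0`.
Substituting `u = 2v` and using `F(2v) ≥ 2(1+ε) F(v)` gives `∫₀^{λ/2} F(u) u⁻² du ≤ I(λ)/(1+ε)`,
while monotonicity bounds the remaining piece `∫_{λ/2}^λ F(u) u⁻² du` by `F(λ)/λ`. As `I(λ)` is
finite, this yields `ε/(1+ε) · I(λ) ≤ F(λ)/λ`, i.e. `λ I(λ) ≤ (1 + ε⁻¹) F(λ)`.
-/

open MeasureTheory Set intervalIntegral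

theorem integral_const_div_sq {a b : ℝ} (ha : 0 < a) (hab : a ≤ b) (c : ℝ) :
    ∫ u in a..b, c / u ^ 2 = c * (a⁻¹ - b⁻¹) := by
  have hpos : ∀ u ∈ uIcc a b, u ≠ 0 := fun u hu =>
    (ha.trans_le (uIcc_of_le hab ▸ hu).1).ne'
  have hint : IntervalIntegrable (fun u => c / u ^ 2) volume a b :=
    (continuousOn_const.div (continuousOn_pow 2) fun u hu =>
      pow_ne_zero 2 (hpos u hu)).intervalIntegrable
  rw [integral_eq_sub_of_hasDerivAt (f := fun u => -c * u⁻¹) (fun u hu => ?_) hint]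
  · ring
  · simpa [div_eq_mul_inv] using (hasDerivAt_inv (hpos u hu)).const_mul (-c)

theorem integral_div_sq_le_of_monotoneOn {F : ℝ → ℝ} {a b : ℝ} (ha : 0 < a) (hab : a ≤ b)
    (hF : MonotoneOn F (Icc a b)) (hint : IntervalIntegrable (fun u => F u / u ^ 2) volume a b) :
    ∫ u in a..b, F u / u ^ 2 ≤ F b * (a⁻¹ - b⁻¹) := by
  rw [← integral_const_div_sq ha hab]
  refine integral_mono_on hab hint ?_ fun u hu => ?_
  · exact (continuousOn_const.div (continuousOn_pow 2) fun u hu =>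
      pow_ne_zero 2 (ha.trans_le hu.1).ne').intervalIntegrable_of_Icc hab
  · exact div_le_div_of_nonneg_right (hF hu (right_mem_Icc.2 hab) hu.2) (sq_nonneg u)

theorem mul_integral_div_sq_half_le {F : ℝ → ℝ} {c l : ℝ} (hl : 0 ≤ l)
    (hgrowth : ∀ u ∈ Ioo 0 (l / 2), c * F u ≤ F (2 * u))
    (hint : IntervalIntegrable (fun u => F u / u ^ 2) volume 0 l) :
    c * ∫ u in 0..l / 2, F u / u ^ 2 ≤ 2 * ∫ u in 0..l, F u / u ^ 2 := by
  have hdil : 2 * ∫ u in 0..l, F u / u ^ 2 = ∫ u in 0..l / 2, 4 * (F (2 * u) / (2 * u) ^ 2) := by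
    rw [intervalIntegral.integral_const_mul,
      integral_comp_mul_left (fun u => F u / u ^ 2) two_ne_zero]
    simp only [mul_zero, smul_eq_mul]
    rw [mul_div_cancel₀ l two_ne_zero]
    ring
  rw [hdil, ← intervalIntegral.integral_const_mul]
  refine integral_mono_on_of_le_Ioo (by linarith) ((hint.mono_set ?_).const_mul c) ?_ fun u hu => ?_
  · exact uIcc_subset_uIcc left_mem_uIcc (uIcc_of_le hl ▸ ⟨by linarith, by linarith⟩)
  · simpa using (hint.comp_mul_left (c := 2)).const_mul 4
  · have hu0 : u ≠ 0 := hu.1.ne'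
    calc c * (F u / u ^ 2) = c * F u / u ^ 2 := by ring
      _ ≤ F (2 * u) / u ^ 2 := div_le_div_of_nonneg_right (hgrowth u hu) (sq_nonneg u)
      _ = 4 * (F (2 * u) / (2 * u) ^ 2) := by field_simp; ring

theorem integral_div_sq_le_of_doubling {F : ℝ → ℝ} {ε l : ℝ} (hε : 0 < ε) (hl : 0 < l)
    (hmono : MonotoneOn F (Icc (l / 2) l))
    (hgrowth : ∀ u ∈ Ioo 0 (l / 2), 2 * (1 + ε) * F u ≤ F (2 * u))
    (hint : IntervalIntegrable (fun u => F u / u ^ 2) volume 0 l) :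
    ∫ u in 0..l, F u / u ^ 2 ≤ (1 + ε⁻¹) * (F l / l) := by
  have hsub : ∀ a b, 0 ≤ a → a ≤ b → b ≤ l →
      IntervalIntegrable (fun u => F u / u ^ 2) volume a b := fun a b ha hab hb =>
    hint.mono_set (by rw [uIcc_of_le hab, uIcc_of_le hl.le]; exact Icc_subset_Icc ha hb)
  set A := ∫ u in 0..l / 2, F u / u ^ 2
  set B := ∫ u in l / 2..l, F u / u ^ 2
  have hsplit : ∫ u in 0..l, F u / u ^ 2 = A + B :=
    (integral_add_adjacent_intervals (hsub 0 (l / 2) le_rfl (by linarith) (by linarith))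
      (hsub (l / 2) l (by linarith) (by linarith) le_rfl)).symm
  have hB : B ≤ F l / l := by
    calc B ≤ F l * ((l / 2)⁻¹ - l⁻¹) :=
          integral_div_sq_le_of_monotoneOn (by positivity) (by linarith) hmono
            (hsub (l / 2) l (by linarith) (by linarith) le_rfl)
      _ = F l / l := by field_simp; ring
  have hA : A ≤ ε⁻¹ * B := by
    have := mul_integral_div_sq_half_le hl.le hgrowth hint
    rw [le_inv_mul_iff₀ hε]
    linarith
  calc ∫ u in 0..l, F u / u ^ 2 = A + B := hsplit
    _ ≤ (1 + ε⁻¹) * B := by linarith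
    _ ≤ (1 + ε⁻¹) * (F l / l) := by gcongr

theorem stmt_15_general (F : ℝ → ℝ) (hmono : MonotoneOn F (Set.Ioi (0 : ℝ)))
    (hF0 : ∀ l > (0 : ℝ), 0 ≤ F l)
    (ε δ : ℝ) (hε : 0 < ε)
    (hgrowth : ∀ l, 0 < l → l ≤ δ → 2 * (1 + ε) * F l ≤ F (2 * l))
    (hconv : IntegrableOn (fun u => F u / u ^ 2) (Set.Ioc (0 : ℝ) δ))
    (G : ℝ → ℝ)
    (hG : ∀ l > (0 : ℝ), G l = l⁻¹ * F l + ∫ u in Set.Ioc (0 : ℝ) l, F u / u ^ 2) :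
    ∀ l, 0 < l → l ≤ δ → F l ≤ l * G l ∧ l * G l ≤ (2 + ε⁻¹) * F l := by
  intro l hl hlδ
  have hint : IntervalIntegrable (fun u => F u / u ^ 2) volume 0 l :=
    (intervalIntegrable_iff_integrableOn_Ioc_of_le hl.le).2
      (hconv.mono_set (Ioc_subset_Ioc_right hlδ))
  have hbound := integral_div_sq_le_of_doubling hε hl
    (hmono.mono fun u hu => (half_pos hl).trans_le hu.1)
    (fun u hu => hgrowth u hu.1 (by linarith [hu.2])) hint
  rw [integral_of_le hl.le] at hbound
  have hnonneg : 0 ≤ ∫ u in Ioc 0 l, F u / u ^ 2 :=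
    setIntegral_nonneg measurableSet_Ioc fun u hu => div_nonneg (hF0 u hu.1) (sq_nonneg u)
  have hlG : l * G l = F l + l * ∫ u in Ioc 0 l, F u / u ^ 2 := by
    rw [hG l hl]; field_simp
  refine ⟨by rw [hlG]; linarith [mul_nonneg hl.le hnonneg], ?_⟩
  calc l * G l ≤ F l + l * ((1 + ε⁻¹) * (F l / l)) := by rw [hlG]; gcongr
    _ = (2 + ε⁻¹) * F l := by field_simp; ring

/-- If `F` is increasing on `(0,∞)`, nonnegative, and satisfies the growth condition
`F(2λ) ≥ 2(1+ε)F(λ)` for small `λ`, and `G(λ) = λ⁻¹F(λ) + ∫₀^λ u⁻²F(u) du`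
(assumed convergent), then `F(λ) ≤ λ G(λ) ≤ (2 + ε⁻¹) F(λ)` for small `λ`. -/
theorem stmt_15 (F : ℝ → ℝ) (hmono : MonotoneOn F (Set.Ioi (0 : ℝ)))
    (hF0 : ∀ l > (0 : ℝ), 0 ≤ F l)
    (ε δ : ℝ) (hε : 0 < ε) (hδ : 0 < δ)
    (hgrowth : ∀ l, 0 < l → l ≤ δ → 2 * (1 + ε) * F l ≤ F (2 * l))
    (hconv : IntegrableOn (fun u => F u / u ^ 2) (Set.Ioc (0 : ℝ) δ))
    (G : ℝ → ℝ)
    (hG : ∀ l > (0 : ℝ), G l = l⁻¹ * F l + ∫ u in Set.Ioc (0 : ℝ) l, F u / u ^ 2) :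
    ∀ l, 0 < l → l ≤ δ → F l ≤ l * G l ∧ l * G l ≤ (2 + ε⁻¹) * F l :=
  stmt_15_general F hmono hF0 ε δ hε hgrowth hconv G hG
end

section
/- Let H be a finite-dimensional Hilbert space of dimension d and P a positive bounded operator on L²(X,H). Then ‖P‖_{1,∞} ≤ D(P) ≤ d·‖P‖_{1,∞}, where D(P) = esssup_x Dν_P(x) is the density of P and ‖P‖_{1,∞} its L¹→L^∞ operator norm (with ‖f‖_∞ = sup_x ‖f(x)‖_H, ‖f‖₁ = ∫‖f(x)‖_H dμ). -/
/-!
Write `w_i = S e_i` with `S = P^{1/2}`, so that `Dν_P(x) = Σ_i ‖w_i(x)‖²` and a.e.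
`(S h)(x) = Σ_i ⟪e_i, h⟫ w_i(x)`.

Lower bound: Cauchy–Schwarz and Bessel give `‖(S h)(x)‖² ≤ Dν_P(x) ‖h‖²`. For `h = S f` this reads
`‖P f‖_∞² ≤ D(P) ‖S f‖² = D(P) ⟪P f, f⟫ ≤ D(P) ‖P f‖_∞ ‖f‖₁`, and one divides by `‖P f‖_∞`.

Upper bound (a `T T*` argument): `‖S h‖² = ⟪P h, h⟫ ≤ ‖P‖_{1,∞} ‖h‖₁²`, and `L¹`–`L^∞` duality
turns this into `‖S g‖_∞² ≤ ‖P‖_{1,∞} ‖g‖²`. Testing on `g = Σ_{i ∈ s} c_i e_i` for a countable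
dense set of coefficients, for a.e. `x` the map `c ↦ Σ c_i w_i(x)` into `H` has norm at most
`‖P‖_{1,∞}^{1/2}`; its Hilbert–Schmidt norm `Σ_i ‖w_i(x)‖²` is then at most `d ‖P‖_{1,∞}`, since
it can be computed on an orthonormal basis of the `d`-dimensional space `H`.
-/

open MeasureTheory Set Filter
open scoped ENNReal InnerProductSpace

namespace DensityPinching

variable {X : Type*} [MeasurableSpace X] {μ : Measure X}

theorem ae_forall_of_isClosed {E : Type*} [TopologicalSpace E]
    [TopologicalSpace.SeparableSpace E] {p : X → E → Prop} (hp : ∀ x, IsClosed {c | p x c})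
    (h : ∀ c, ∀ᵐ x ∂μ, p x c) : ∀ᵐ x ∂μ, ∀ c, p x c := by
  obtain ⟨s, hs, hdense⟩ := TopologicalSpace.exists_countable_dense E
  filter_upwards [(ae_ball_iff hs).2 fun c _ => h c] with x hx c
  exact (hp x).closure_subset_iff.2 (fun c hc => hx c hc) (hdense.closure_eq ▸ mem_univ c)

theorem norm_sum_smul_sq_le {E ι : Type*} [SeminormedAddCommGroup E] [NormedSpace ℝ E]
    (s : Finset ι) (c : ι → ℝ) (w : ι → E) :
    ‖∑ i ∈ s, c i • w i‖ ^ 2 ≤ (∑ i ∈ s, c i ^ 2) * ∑ i ∈ s, ‖w i‖ ^ 2 := by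
  calc ‖∑ i ∈ s, c i • w i‖ ^ 2 ≤ (∑ i ∈ s, |c i| * ‖w i‖) ^ 2 := by
        gcongr
        exact norm_sum_le_of_le s fun i _ => by rw [norm_smul, Real.norm_eq_abs]
    _ ≤ (∑ i ∈ s, |c i| ^ 2) * ∑ i ∈ s, ‖w i‖ ^ 2 := Finset.sum_mul_sq_le_sq_mul_sq s _ _
    _ = (∑ i ∈ s, c i ^ 2) * ∑ i ∈ s, ‖w i‖ ^ 2 := by simp only [sq_abs]

theorem eLpNorm_top_sq_le_of_ae {E : Type*} [NormedAddCommGroup E] {g : X → E} {C : ℝ≥0∞}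
    (h : ∀ᵐ x ∂μ, ENNReal.ofReal (‖g x‖ ^ 2) ≤ C) : eLpNorm g ∞ μ ^ 2 ≤ C := by
  simp only [ENNReal.ofReal_pow (norm_nonneg _), ofReal_norm] at h
  have : eLpNorm g ∞ μ ≤ C ^ (2⁻¹ : ℝ) := by
    rw [eLpNorm_exponent_top, eLpNormEssSup_eq_essSup_enorm]
    refine essSup_le_of_ae_le _ ?_
    filter_upwards [h] with x hx
    rwa [ENNReal.le_rpow_inv_iff two_pos, ENNReal.rpow_two]
  rwa [ENNReal.le_rpow_inv_iff two_pos, ENNReal.rpow_two] at this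

variable {H : Type*} [NormedAddCommGroup H] [InnerProductSpace ℝ H]

theorem ofReal_inner_le_eLpNorm_top_mul_eLpNorm_one (f g : Lp H 2 μ) :
    ENNReal.ofReal ⟪f, g⟫_ℝ ≤ eLpNorm f ∞ μ * eLpNorm g 1 μ := by
  rw [L2.inner_def]
  calc ENNReal.ofReal (∫ x, ⟪f x, g x⟫_ℝ ∂μ) ≤ ‖∫ x, ⟪f x, g x⟫_ℝ ∂μ‖ₑ := Real.ofReal_le_enorm _
    _ ≤ eLpNorm (fun x => ⟪f x, g x⟫_ℝ) 1 μ := by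
        rw [eLpNorm_one_eq_lintegral_enorm]; exact enorm_integral_le_lintegral_enorm _
    _ ≤ (1 : NNReal) * eLpNorm f ∞ μ * eLpNorm g 1 μ :=
        eLpNorm_le_eLpNorm_top_mul_eLpNorm 1 _ (Lp.aestronglyMeasurable g) _ 1
          (Eventually.of_forall fun x => by simpa using nnnorm_inner_le_nnnorm (𝕜 := ℝ) _ _)
    _ = eLpNorm f ∞ μ * eLpNorm g 1 μ := by simp

theorem ae_ofReal_norm_sq_le_of_hasSum {ι : Type*} [Countable ι] {c : ι → ℝ}
    {v : ι → Lp H 2 μ} {u : Lp H 2 μ} (hu : HasSum (fun i => c i • v i) u) :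
    ∀ᵐ x ∂μ, ENNReal.ofReal (‖u x‖ ^ 2) ≤
      (∑' i, ENNReal.ofReal (c i ^ 2)) * ∑' i, ENNReal.ofReal (‖v i x‖ ^ 2) := by
  obtain ⟨s, hs⟩ := (atTop : Filter (Finset ι)).exists_seq_tendsto
  obtain ⟨n, -, hlim⟩ := (tendstoInMeasure_of_tendsto_Lp (hu.comp hs)).exists_seq_tendsto_ae
  have hsum : ∀ k, ⇑(∑ i ∈ s k, c i • v i) =ᵐ[μ] fun x => ∑ i ∈ s k, c i • v i x := by
    intro k
    filter_upwards [Lp.coeFn_fun_finsetSum (s k) (fun i => c i • v i),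
      ae_all_iff.2 fun i => Lp.coeFn_smul (c i) (v i)] with x hx hsmul
    simp only [hx, hsmul, Pi.smul_apply]
  filter_upwards [hlim, ae_all_iff.2 hsum] with x hx hsum
  have hcont : Continuous fun y : H => ENNReal.ofReal (‖y‖ ^ 2) :=
    ENNReal.continuous_ofReal.comp (by fun_prop)
  refine le_of_tendsto ((hcont.tendsto _).comp hx) (Eventually.of_forall fun k => ?_)
  simp only [Function.comp_apply, hsum]
  calc ENNReal.ofReal (‖∑ i ∈ s (n k), c i • v i x‖ ^ 2)
      ≤ ENNReal.ofReal ((∑ i ∈ s (n k), c i ^ 2) * ∑ i ∈ s (n k), ‖v i x‖ ^ 2) :=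
        ENNReal.ofReal_le_ofReal (norm_sum_smul_sq_le _ _ _)
    _ = (∑ i ∈ s (n k), ENNReal.ofReal (c i ^ 2)) *
          ∑ i ∈ s (n k), ENNReal.ofReal (‖v i x‖ ^ 2) := by
        rw [ENNReal.ofReal_mul (by positivity),
          ENNReal.ofReal_sum_of_nonneg fun _ _ => by positivity,
          ENNReal.ofReal_sum_of_nonneg fun _ _ => by positivity]
    _ ≤ _ := by gcongr <;> exact ENNReal.sum_le_tsum _


theorem exists_eLpNorm_one_le_and_setLIntegral_eq_inner (u : Lp H 2 μ) {s : Set X}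
    (hs : MeasurableSet s) (hμs : μ s < ∞) :
    ∃ h : Lp H 2 μ, eLpNorm h 1 μ ≤ μ s ∧ ∫⁻ x in s, ‖u x‖ₑ ∂μ = ENNReal.ofReal ⟪u, h⟫_ℝ := by
  set h₀ : X → H := s.indicator fun x => ‖u x‖⁻¹ • u x
  have hbound : ∀ x, ‖h₀ x‖ ≤ ‖s.indicator (fun _ => (1 : ℝ)) x‖ := by
    intro x
    by_cases hx : x ∈ s
    · simp only [h₀, indicator_of_mem hx, norm_smul, norm_inv, norm_norm, norm_one]
      exact inv_mul_le_one
    · simp [h₀, hx]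
  have hmeas : AEStronglyMeasurable h₀ μ :=
    (((Lp.stronglyMeasurable u).norm.measurable.inv.stronglyMeasurable.smul
      (Lp.stronglyMeasurable u)).indicator hs).aestronglyMeasurable
  have hmem : MemLp h₀ 2 μ :=
    (memLp_indicator_const 2 hs 1 (Or.inr hμs.ne)).of_le hmeas (Eventually.of_forall hbound)
  have hinner : ∀ x, ⟪u x, h₀ x⟫_ℝ = s.indicator (fun x => ‖u x‖) x := by
    intro x
    by_cases hx : x ∈ s
    · rcases eq_or_ne (u x) 0 with h0 | h0
      · simp [h₀, hx, h0]
      · simp only [h₀, indicator_of_mem hx, real_inner_smul_right, real_inner_self_eq_norm_sq]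
        field_simp
    · simp [h₀, hx]
  refine ⟨hmem.toLp h₀, ?_, ?_⟩
  · rw [eLpNorm_congr_ae hmem.coeFn_toLp]
    calc eLpNorm h₀ 1 μ ≤ eLpNorm (s.indicator fun _ => (1 : ℝ)) 1 μ :=
          eLpNorm_mono hbound
      _ = μ s := by simp [eLpNorm_indicator_const hs one_ne_zero ENNReal.one_ne_top]
  · have hae : (fun x => ⟪u x, (hmem.toLp h₀) x⟫_ℝ) =ᵐ[μ] s.indicator fun x => ‖u x‖ := by
      filter_upwards [hmem.coeFn_toLp] with x hx
      rw [hx, hinner]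
    rw [L2.inner_def, integral_congr_ae hae, integral_indicator hs,
      ofReal_integral_norm_eq_lintegral_enorm]
    exact (integrable_norm_iff (Lp.aestronglyMeasurable u).restrict).1 <|
      (integrable_indicator_iff hs).1 <| (L2.integrable_inner (𝕜 := ℝ) u _).congr hae

theorem eLpNorm_top_le_of_forall_ofReal_inner_le [SigmaFinite μ] (u : Lp H 2 μ) (C : ℝ≥0∞)
    (hC : ∀ h : Lp H 2 μ, eLpNorm h 1 μ ≠ ∞ → ENNReal.ofReal ⟪u, h⟫_ℝ ≤ C * eLpNorm h 1 μ) :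
    eLpNorm u ∞ μ ≤ C := by
  rw [eLpNorm_exponent_top, eLpNormEssSup_eq_essSup_enorm]
  refine essSup_le_of_ae_le _ <| ae_le_of_forall_setLIntegral_le_of_sigmaFinite
    (Lp.stronglyMeasurable u).enorm fun s hs hμs => ?_
  obtain ⟨h, h1, hint⟩ := exists_eLpNorm_one_le_and_setLIntegral_eq_inner u hs hμs
  calc ∫⁻ x in s, ‖u x‖ₑ ∂μ = ENNReal.ofReal ⟪u, h⟫_ℝ := hint
    _ ≤ C * eLpNorm h 1 μ := hC h (h1.trans_lt hμs).ne
    _ ≤ C * μ s := by gcongr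
    _ = ∫⁻ _ in s, C ∂μ := by rw [setLIntegral_const, mul_comm]

section FiniteDimensional

variable {E ι : Type*} [NormedAddCommGroup E] [InnerProductSpace ℝ E]

theorem sum_inner_sq_le_of_forall_norm_sum_smul_sq_le {s : Finset ι} {w : ι → E} {N : ℝ}
    (hN : 0 ≤ N) (h : ∀ c : ι → ℝ, ‖∑ i ∈ s, c i • w i‖ ^ 2 ≤ N * ∑ i ∈ s, c i ^ 2) (v : E) :
    ∑ i ∈ s, ⟪w i, v⟫_ℝ ^ 2 ≤ N * ‖v‖ ^ 2 := by
  set A := ∑ i ∈ s, ⟪w i, v⟫_ℝ ^ 2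
  have hA : A = ⟪∑ i ∈ s, ⟪w i, v⟫_ℝ • w i, v⟫_ℝ := by
    simp only [A, sum_inner, real_inner_smul_left, sq]
  have hA2 : A ^ 2 ≤ N * A * ‖v‖ ^ 2 :=
    calc A ^ 2 ≤ ‖∑ i ∈ s, ⟪w i, v⟫_ℝ • w i‖ ^ 2 * ‖v‖ ^ 2 := by
          rw [hA, ← mul_pow]
          exact pow_le_pow_left₀ (hA ▸ by positivity) (real_inner_le_norm _ _) 2
      _ ≤ N * A * ‖v‖ ^ 2 := by gcongr; exact h _
  nlinarith [show 0 ≤ A by positivity, show 0 ≤ N * ‖v‖ ^ 2 by positivity]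

theorem sum_norm_sq_le_finrank_mul_of_forall_norm_sum_smul_sq_le [FiniteDimensional ℝ E]
    {s : Finset ι} {w : ι → E} {N : ℝ} (hN : 0 ≤ N)
    (h : ∀ c : ι → ℝ, ‖∑ i ∈ s, c i • w i‖ ^ 2 ≤ N * ∑ i ∈ s, c i ^ 2) :
    ∑ i ∈ s, ‖w i‖ ^ 2 ≤ Module.finrank ℝ E * N := by
  let e := stdOrthonormalBasis ℝ E
  calc ∑ i ∈ s, ‖w i‖ ^ 2 = ∑ j, ∑ i ∈ s, ⟪w i, e j⟫_ℝ ^ 2 := by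
        rw [Finset.sum_comm]
        refine Finset.sum_congr rfl fun i _ => ?_
        simp only [← e.sum_sq_norm_inner_right, Real.norm_eq_abs, sq_abs, real_inner_comm]
    _ ≤ ∑ _j : Fin (Module.finrank ℝ E), N := by
        gcongr with j
        simpa [e.orthonormal.norm_eq_one] using
          sum_inner_sq_le_of_forall_norm_sum_smul_sq_le hN h (e j)
    _ = Module.finrank ℝ E * N := by simp

end FiniteDimensional

section Operator

variable {ι : Type*} {P S : Lp H 2 μ →L[ℝ] Lp H 2 μ}

noncomputable def normL1Linfty (μ : Measure X) (P : Lp H 2 μ →L[ℝ] Lp H 2 μ) : ℝ≥0∞ :=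
  ⨆ (f : Lp H 2 μ) (_ : eLpNorm f 1 μ ≤ 1), eLpNorm (P f) ∞ μ

noncomputable def density (S : Lp H 2 μ →L[ℝ] Lp H 2 μ) (b : HilbertBasis ι ℝ (Lp H 2 μ))
    (x : X) : ℝ≥0∞ :=
  ∑' i, ENNReal.ofReal (‖S (b i) x‖ ^ 2)

theorem eLpNorm_Lp_smul {E : Type*} [NormedAddCommGroup E] [NormedSpace ℝ E] {p : ℝ≥0∞}
    (c : ℝ) (f : Lp E p μ) (q : ℝ≥0∞) : eLpNorm (c • f) q μ = ‖c‖ₑ * eLpNorm f q μ := by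
  rw [eLpNorm_congr_ae (Lp.coeFn_smul c f), eLpNorm_const_smul]

theorem eLpNorm_top_apply_le_normL1Linfty_mul (P : Lp H 2 μ →L[ℝ] Lp H 2 μ) (h : Lp H 2 μ)
    (hh : eLpNorm h 1 μ ≠ ∞) : eLpNorm (P h) ∞ μ ≤ normL1Linfty μ P * eLpNorm h 1 μ := by
  rcases eq_or_ne (eLpNorm h 1 μ) 0 with h0 | h0
  · rw [eLpNorm_eq_zero_iff (Lp.aestronglyMeasurable h) one_ne_zero,
      ← Lp.eq_zero_iff_ae_eq_zero] at h0
    rw [h0, map_zero, eLpNorm_congr_ae (Lp.coeFn_zero H 2 μ), eLpNorm_zero]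
    exact zero_le
  set t := (eLpNorm h 1 μ).toReal
  have ht : 0 < t := ENNReal.toReal_pos h0 hh
  have hnormalized : eLpNorm (t⁻¹ • h) 1 μ ≤ 1 := by
    rw [eLpNorm_Lp_smul, Real.enorm_of_nonneg (by positivity), ← ENNReal.ofReal_toReal hh,
      ← ENNReal.ofReal_mul (by positivity), inv_mul_cancel₀ ht.ne', ENNReal.ofReal_one]
  calc eLpNorm (P h) ∞ μ = eLpNorm (t • P (t⁻¹ • h)) ∞ μ := by
        rw [map_smul, smul_smul, mul_inv_cancel₀ ht.ne', one_smul]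
    _ = eLpNorm (P (t⁻¹ • h)) ∞ μ * eLpNorm h 1 μ := by
        rw [eLpNorm_Lp_smul, Real.enorm_of_nonneg ht.le, ENNReal.ofReal_toReal hh, mul_comm]
    _ ≤ normL1Linfty μ P * eLpNorm h 1 μ := by
        gcongr
        exact le_iSup₂ (f := fun (f : Lp H 2 μ) (_ : eLpNorm f 1 μ ≤ 1) => eLpNorm (P f) ∞ μ)
          _ hnormalized

theorem norm_apply_sq_eq_inner (hSsymm : ∀ f g, ⟪S f, g⟫_ℝ = ⟪f, S g⟫_ℝ) (hS : S ∘L S = P)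
    (f : Lp H 2 μ) : ‖S f‖ ^ 2 = ⟪P f, f⟫_ℝ := by
  rw [← real_inner_self_eq_norm_sq, hSsymm, real_inner_comm, ← hS]
  rfl

theorem ae_ofReal_norm_apply_sq_le_density_mul [Countable ι] (b : HilbertBasis ι ℝ (Lp H 2 μ))
    (S : Lp H 2 μ →L[ℝ] Lp H 2 μ) (h : Lp H 2 μ) :
    ∀ᵐ x ∂μ, ENNReal.ofReal (‖S h x‖ ^ 2) ≤ density S b x * ENNReal.ofReal (‖h‖ ^ 2) := by
  have hsum : HasSum (fun i => b.repr h i • S (b i)) (S h) := by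
    simpa only [map_smul] using (b.hasSum_repr h).mapL S
  have hbessel : ∑' i, ENNReal.ofReal (b.repr h i ^ 2) ≤ ENNReal.ofReal (‖h‖ ^ 2) := by
    have := b.orthonormal.tsum_inner_products_le h
    have hsummable := b.orthonormal.inner_products_summable h
    simp only [Real.norm_eq_abs, sq_abs, ← b.repr_apply_apply] at this hsummable
    rw [← ENNReal.ofReal_tsum_of_nonneg (fun _ => sq_nonneg _) hsummable]
    exact ENNReal.ofReal_le_ofReal this
  filter_upwards [ae_ofReal_norm_sq_le_of_hasSum hsum] with x hx
  exact hx.trans (by rw [mul_comm]; gcongr; exact le_rfl)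

theorem normL1Linfty_le_essSup_density [Countable ι] (b : HilbertBasis ι ℝ (Lp H 2 μ))
    (hSsymm : ∀ f g, ⟪S f, g⟫_ℝ = ⟪f, S g⟫_ℝ) (hS : S ∘L S = P) :
    normL1Linfty μ P ≤ essSup (density S b) μ := by
  set E := essSup (density S b) μ
  refine iSup₂_le fun f hf => ?_
  set M := eLpNorm (P f) ∞ μ
  have hSf : ENNReal.ofReal (‖S f‖ ^ 2) ≤ M := by
    rw [norm_apply_sq_eq_inner hSsymm hS]
    calc _ ≤ M * eLpNorm f 1 μ := ofReal_inner_le_eLpNorm_top_mul_eLpNorm_one _ _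
      _ ≤ M := mul_le_of_le_one_right' hf
  have hM : M ^ 2 ≤ E * ENNReal.ofReal (‖S f‖ ^ 2) := by
    refine eLpNorm_top_sq_le_of_ae ?_
    filter_upwards [ae_ofReal_norm_apply_sq_le_density_mul b S (S f),
      ae_le_essSup (f := density S b)] with x hx hE
    rw [← hS]
    exact hx.trans (by gcongr)
  rcases eq_or_ne E ∞ with hE | hE
  · simp [hE]
  rcases eq_or_ne M 0 with hM0 | hM0
  · simp [hM0]
  have hMtop : M ≠ ∞ := by
    have hM2 : M ^ 2 ≠ ∞ := ne_top_of_le_ne_top (ENNReal.mul_ne_top hE ENNReal.ofReal_ne_top) hM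
    exact fun h => hM2 (by simp [h])
  rw [← ENNReal.mul_le_mul_iff_left hM0 hMtop, ← sq]
  exact hM.trans (by gcongr)

theorem norm_apply_le_sqrt_mul (hSsymm : ∀ f g, ⟪S f, g⟫_ℝ = ⟪f, S g⟫_ℝ) (hS : S ∘L S = P)
    (hN : normL1Linfty μ P ≠ ∞) (h : Lp H 2 μ) (hh : eLpNorm h 1 μ ≠ ∞) :
    ‖S h‖ ≤ √(normL1Linfty μ P).toReal * (eLpNorm h 1 μ).toReal := by
  have hsq : ENNReal.ofReal (‖S h‖ ^ 2) ≤ normL1Linfty μ P * eLpNorm h 1 μ ^ 2 := by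
    rw [norm_apply_sq_eq_inner hSsymm hS, sq, ← mul_assoc]
    exact (ofReal_inner_le_eLpNorm_top_mul_eLpNorm_one _ _).trans
      (by gcongr; exact eLpNorm_top_apply_le_normL1Linfty_mul P h hh)
  rw [← Real.sqrt_sq (ENNReal.toReal_nonneg (a := eLpNorm h 1 μ)),
    ← Real.sqrt_mul ENNReal.toReal_nonneg, Real.le_sqrt (norm_nonneg _) (by positivity),
    ← ENNReal.ofReal_le_ofReal_iff (by positivity), ENNReal.ofReal_mul ENNReal.toReal_nonneg,
    ENNReal.ofReal_pow ENNReal.toReal_nonneg, ENNReal.ofReal_toReal hN, ENNReal.ofReal_toReal hh]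
  exact hsq

theorem ae_norm_apply_sq_le [SigmaFinite μ] (hSsymm : ∀ f g, ⟪S f, g⟫_ℝ = ⟪f, S g⟫_ℝ)
    (hS : S ∘L S = P) (hN : normL1Linfty μ P ≠ ∞) (g : Lp H 2 μ) :
    ∀ᵐ x ∂μ, ‖S g x‖ ^ 2 ≤ (normL1Linfty μ P).toReal * ‖g‖ ^ 2 := by
  set N := (normL1Linfty μ P).toReal
  have hdual : eLpNorm (S g) ∞ μ ≤ ENNReal.ofReal (√N * ‖g‖) := by
    refine eLpNorm_top_le_of_forall_ofReal_inner_le _ _ fun h hh => ?_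
    calc ENNReal.ofReal ⟪S g, h⟫_ℝ ≤ ENNReal.ofReal (‖g‖ * (√N * (eLpNorm h 1 μ).toReal)) := by
          rw [hSsymm]
          gcongr
          exact (real_inner_le_norm _ _).trans
            (by gcongr; exact norm_apply_le_sqrt_mul hSsymm hS hN h hh)
      _ = ENNReal.ofReal (√N * ‖g‖) * eLpNorm h 1 μ := by
          rw [← ENNReal.ofReal_toReal hh, ← ENNReal.ofReal_mul (by positivity),
            ENNReal.toReal_ofReal ENNReal.toReal_nonneg]
          ring_nf
  filter_upwards [ae_le_eLpNormEssSup (f := S g)] with x hx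
  have hx' : ‖S g x‖ ≤ √N * ‖g‖ := by
    rw [← ENNReal.ofReal_le_ofReal_iff (by positivity), ofReal_norm]
    exact hx.trans (by rwa [eLpNorm_exponent_top] at hdual)
  calc ‖S g x‖ ^ 2 ≤ (√N * ‖g‖) ^ 2 := by gcongr
    _ = N * ‖g‖ ^ 2 := by rw [mul_pow, Real.sq_sqrt ENNReal.toReal_nonneg]

theorem ae_forall_norm_sum_smul_apply_sq_le [SigmaFinite μ] [Countable ι]
    (b : HilbertBasis ι ℝ (Lp H 2 μ)) (hSsymm : ∀ f g, ⟪S f, g⟫_ℝ = ⟪f, S g⟫_ℝ)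
    (hS : S ∘L S = P) (hN : normL1Linfty μ P ≠ ∞) :
    ∀ᵐ x ∂μ, ∀ (s : Finset ι) (c : ι → ℝ),
      ‖∑ i ∈ s, c i • S (b i) x‖ ^ 2 ≤ (normL1Linfty μ P).toReal * ∑ i ∈ s, c i ^ 2 := by
  refine ae_all_iff.2 fun s => ae_forall_of_isClosed
    (fun x => isClosed_le (by fun_prop) (by fun_prop)) fun c => ?_
  have hnorm : ‖∑ i ∈ s, c i • b i‖ ^ 2 = ∑ i ∈ s, c i ^ 2 := by
    rw [← real_inner_self_eq_norm_sq, b.orthonormal.inner_sum]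
    simp [sq]
  have hmap : S (∑ i ∈ s, c i • b i) = ∑ i ∈ s, c i • S (b i) := by
    simp only [map_sum, map_smul]
  filter_upwards [ae_norm_apply_sq_le hSsymm hS hN (∑ i ∈ s, c i • b i),
    Lp.coeFn_fun_finsetSum s (fun i => c i • S (b i)),
    ae_all_iff.2 fun i => Lp.coeFn_smul (c i) (S (b i))] with x hx hsum hsmul
  rw [hmap, hsum, hnorm] at hx
  simpa only [hsmul, Pi.smul_apply] using hx

theorem essSup_density_le_finrank_mul [SigmaFinite μ] [FiniteDimensional ℝ H] [Countable ι]
    (b : HilbertBasis ι ℝ (Lp H 2 μ)) (hSsymm : ∀ f g, ⟪S f, g⟫_ℝ = ⟪f, S g⟫_ℝ)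
    (hS : S ∘L S = P) :
    essSup (density S b) μ ≤ Module.finrank ℝ H * normL1Linfty μ P := by
  rcases eq_or_ne (normL1Linfty μ P) ∞ with hN | hN
  · -- `0 * ∞ = 0` in `ℝ≥0∞`, so `d = 0` is not trivial
    rcases eq_or_ne (Module.finrank ℝ H) 0 with hd | hd
    · have hzero := finrank_zero_iff_forall_zero.1 hd
      calc essSup (density S b) μ ≤ 0 :=
            essSup_le_of_ae_le _ (Eventually.of_forall fun x => by simp [density, hzero])
        _ ≤ _ := zero_le
    · simp [hN, hd]
  refine essSup_le_of_ae_le _ ?_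
  filter_upwards [ae_forall_norm_sum_smul_apply_sq_le b hSsymm hS hN] with x hx
  rw [density, ENNReal.tsum_eq_iSup_sum]
  refine iSup_le fun s => ?_
  calc ∑ i ∈ s, ENNReal.ofReal (‖S (b i) x‖ ^ 2)
      = ENNReal.ofReal (∑ i ∈ s, ‖S (b i) x‖ ^ 2) :=
        (ENNReal.ofReal_sum_of_nonneg fun _ _ => by positivity).symm
    _ ≤ ENNReal.ofReal (Module.finrank ℝ H * (normL1Linfty μ P).toReal) :=
        ENNReal.ofReal_le_ofReal <|
          sum_norm_sq_le_finrank_mul_of_forall_norm_sum_smul_sq_le ENNReal.toReal_nonneg (hx s)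
    _ = Module.finrank ℝ H * normL1Linfty μ P := by
        rw [ENNReal.ofReal_mul (by positivity), ENNReal.ofReal_natCast, ENNReal.ofReal_toReal hN]

end Operator

end DensityPinching

theorem stmt_17_general {X : Type*} [MeasurableSpace X] (μ : Measure X) [SigmaFinite μ]
    {H : Type*} [NormedAddCommGroup H] [InnerProductSpace ℝ H]
    [FiniteDimensional ℝ H]
    {ι : Type*} [Countable ι] (b : HilbertBasis ι ℝ (Lp H 2 μ))
    (P S : Lp H 2 μ →L[ℝ] Lp H 2 μ)
    (hSsymm : ∀ f g, ⟪S f, g⟫_ℝ = ⟪f, S g⟫_ℝ)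
    (hS : S ∘L S = P) :
    (⨆ (f : Lp H 2 μ) (_ : eLpNorm (⇑f) 1 μ ≤ 1), eLpNorm (⇑(P f)) ⊤ μ)
        ≤ essSup (fun x => ∑' i, ENNReal.ofReal (‖(S (b i) : Lp H 2 μ) x‖ ^ 2)) μ ∧
      essSup (fun x => ∑' i, ENNReal.ofReal (‖(S (b i) : Lp H 2 μ) x‖ ^ 2)) μ
        ≤ (Module.finrank ℝ H : ℝ≥0∞) *
          ⨆ (f : Lp H 2 μ) (_ : eLpNorm (⇑f) 1 μ ≤ 1), eLpNorm (⇑(P f)) ⊤ μ :=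
  ⟨DensityPinching.normL1Linfty_le_essSup_density b hSsymm hS,
    DensityPinching.essSup_density_le_finrank_mul b hSsymm hS⟩

/-- Pinching between ultracontractive norm and density (Proposition 1.1,
inequality (7)).  Here `H` is a `d`-dimensional Hilbert space, `P` a positive
bounded operator on `L²(X,H)` with positive square root `S = P^{1/2}`, the
density function is `Dν_P(x) = Σ_i ‖(P^{1/2} e_i)(x)‖²_H` for a Hilbert basis
`(e_i)`, `D(P)` is its essential supremum, and `‖P‖_{1,∞}` is the `L¹ → L^∞`
operator norm (with `‖f‖_∞ = sup_x ‖f(x)‖_H`, `‖f‖₁ = ∫ ‖f(x)‖_H dμ`).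
Then `‖P‖_{1,∞} ≤ D(P) ≤ d · ‖P‖_{1,∞}`. -/
theorem stmt_17 {X : Type*} [MeasurableSpace X] (μ : Measure X) [SigmaFinite μ]
    {H : Type*} [NormedAddCommGroup H] [InnerProductSpace ℝ H]
    [FiniteDimensional ℝ H]
    {ι : Type*} [Countable ι] (b : HilbertBasis ι ℝ (Lp H 2 μ))
    (P S : Lp H 2 μ →L[ℝ] Lp H 2 μ)
    (hPsymm : ∀ f g, ⟪P f, g⟫_ℝ = ⟪f, P g⟫_ℝ)
    (hPpos : ∀ f, 0 ≤ ⟪P f, f⟫_ℝ)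
    (hSsymm : ∀ f g, ⟪S f, g⟫_ℝ = ⟪f, S g⟫_ℝ)
    (hSpos : ∀ f, 0 ≤ ⟪S f, f⟫_ℝ)
    (hS : S ∘L S = P) :
    (⨆ (f : Lp H 2 μ) (_ : eLpNorm (⇑f) 1 μ ≤ 1), eLpNorm (⇑(P f)) ⊤ μ)
        ≤ essSup (fun x => ∑' i, ENNReal.ofReal (‖(S (b i) : Lp H 2 μ) x‖ ^ 2)) μ ∧
      essSup (fun x => ∑' i, ENNReal.ofReal (‖(S (b i) : Lp H 2 μ) x‖ ^ 2)) μ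
        ≤ (Module.finrank ℝ H : ℝ≥0∞) *
          ⨆ (f : Lp H 2 μ) (_ : eLpNorm (⇑f) 1 μ ≤ 1), eLpNorm (⇑(P f)) ⊤ μ :=
  stmt_17_general μ b P S hSsymm hS
end

section
/- Let A be a positive self-adjoint operator on L²(X,H) with spectral densities F_Ω(λ) = τ(χ_Ω Π_{[0,λ]} χ_Ω), and let ρ be a nonzero positive operator supported in a domain Ω of finite measure with finite energy E(ρ) = τ(ρ^{1/2}Aρ^{1/2}). Then τ(ρ)/(4‖ρ‖_{2,2}) ≤ F_Ω(4⟨A⟩_ρ) ≤ μ(Ω)·F(4⟨A⟩_ρ), where ⟨A⟩_ρ = E(ρ)/τ(ρ) and F(λ) = D(Π_{[0,λ]}) is the density of the spectral projection. -/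
open MeasureTheory Set
open scoped ENNReal InnerProductSpace

/-!
Write `S(λ) = Σᵢ ν_{R eᵢ}([0, λ])` and `T(λ) = Σᵢ ν_{R eᵢ}((λ, ∞))`, so that `S + T = τ(ρ)`.
Markov's inequality for the spectral measures gives `λ T(λ) ≤ E(ρ)`, so at `λ = 4⟨A⟩_ρ` we get
`4T ≤ τ(ρ)` and hence `τ(ρ) ≤ 4S`. On the other hand `S = Σᵢ ‖Π R eᵢ‖²` is a Hilbert–Schmidt norm,
which equals that of the adjoint `R Π = R χ_Ω Π`, so `S ≤ ‖R²‖ Σⱼ ‖χ_Ω Π eⱼ‖² = ‖ρ‖ F_Ω(λ)`.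
The second inequality bounds the integral over `Ω` of the density by its essential supremum.
-/

section HilbertSpace

variable {E F : Type*} [NormedAddCommGroup E] [InnerProductSpace ℝ E]
  [NormedAddCommGroup F] [InnerProductSpace ℝ F]

theorem HilbertBasis.ofReal_norm_sq_eq_tsum {ι : Type*} (b : HilbertBasis ι ℝ E) (f : E) :
    ENNReal.ofReal (‖f‖ ^ 2) = ∑' i, ENNReal.ofReal (⟪f, b i⟫_ℝ ^ 2) := by
  have hsum : HasSum (fun i => ⟪f, b i⟫_ℝ ^ 2) (‖f‖ ^ 2) := by
    simpa only [real_inner_comm f, ← sq, real_inner_self_eq_norm_sq]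
      using b.hasSum_inner_mul_inner f f
  rw [← hsum.tsum_eq, ENNReal.ofReal_tsum_of_nonneg (fun _ => sq_nonneg _) hsum.summable]

theorem HilbertBasis.tsum_ofReal_norm_sq_eq_of_adjoint {ι κ : Type*} (bE : HilbertBasis ι ℝ E)
    (bF : HilbertBasis κ ℝ F) {A : E → F} {B : F → E} (hAB : ∀ f g, ⟪A f, g⟫_ℝ = ⟪f, B g⟫_ℝ) :
    ∑' i, ENNReal.ofReal (‖A (bE i)‖ ^ 2) = ∑' j, ENNReal.ofReal (‖B (bF j)‖ ^ 2) := by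
  simp_rw [bF.ofReal_norm_sq_eq_tsum, bE.ofReal_norm_sq_eq_tsum, hAB, real_inner_comm (bE _)]
  exact ENNReal.tsum_comm

namespace ContinuousLinearMap

theorem inner_apply_apply_self_of_isSymmetric {T : E →L[ℝ] E}
    (hT : (T : E →ₗ[ℝ] E).IsSymmetric) (f : E) : ⟪T (T f), f⟫_ℝ = ‖T f‖ ^ 2 := by
  rw [← real_inner_self_eq_norm_sq]
  exact hT (T f) f

theorem inner_apply_self_eq_norm_sq_of_comp_self {P : E →L[ℝ] E}
    (hP : (P : E →ₗ[ℝ] E).IsSymmetric) (hPP : P ∘L P = P) (f : E) :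
    ⟪P f, f⟫_ℝ = ‖P f‖ ^ 2 := by
  conv_lhs => rw [← hPP]
  exact inner_apply_apply_self_of_isSymmetric hP f

theorem norm_apply_sq_le_norm_comp_self_mul {T : E →L[ℝ] E} (hT : (T : E →ₗ[ℝ] E).IsSymmetric)
    (f : E) : ‖T f‖ ^ 2 ≤ ‖T ∘L T‖ * ‖f‖ ^ 2 :=
  calc ‖T f‖ ^ 2 = ⟪(T ∘L T) f, f⟫_ℝ := (inner_apply_apply_self_of_isSymmetric hT f).symm
    _ ≤ ‖(T ∘L T) f‖ * ‖f‖ := real_inner_le_norm _ _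
    _ ≤ ‖T ∘L T‖ * ‖f‖ * ‖f‖ := by gcongr; exact le_opNorm _ _
    _ = ‖T ∘L T‖ * ‖f‖ ^ 2 := by ring

theorem comp_eq_self_of_comp_sq_comp_eq {T P : E →L[ℝ] E} (hT : (T : E →ₗ[ℝ] E).IsSymmetric)
    (hPP : P ∘L P = P) (hsupp : P ∘L (T ∘L T) ∘L P = T ∘L T) : T ∘L P = T := by
  ext f
  set g := f - P f
  have hPg : P g = 0 := by rw [map_sub, ← comp_apply P P, hPP, sub_self]
  have hTg : ‖T g‖ ^ 2 = 0 := by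
    rw [← inner_apply_apply_self_of_isSymmetric hT, ← comp_apply T T, ← hsupp]
    simp [hPg]
  have hTg' : T f - T (P f) = 0 := by simpa [g] using hTg
  exact (sub_eq_zero.mp hTg').symm

theorem tsum_ofReal_norm_sq_apply_apply_le {ι : Type*} (b : HilbertBasis ι ℝ E)
    {P T χ : E →L[ℝ] E} (hP : (P : E →ₗ[ℝ] E).IsSymmetric) (hT : (T : E →ₗ[ℝ] E).IsSymmetric)
    (hTχ : T ∘L χ = T) :
    ∑' i, ENNReal.ofReal (‖P (T (b i))‖ ^ 2)
      ≤ ENNReal.ofReal ‖T ∘L T‖ * ∑' j, ENNReal.ofReal (‖χ (P (b j))‖ ^ 2) :=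
  calc ∑' i, ENNReal.ofReal (‖P (T (b i))‖ ^ 2)
      = ∑' j, ENNReal.ofReal (‖T (χ (P (b j)))‖ ^ 2) := by
        refine b.tsum_ofReal_norm_sq_eq_of_adjoint b (A := fun f => P (T f))
          (B := fun f => T (χ (P f))) fun f g => ?_
        rw [← comp_apply T χ, hTχ]
        exact (hP (T f) g).trans (hT f (P g))
    _ ≤ ∑' j, ENNReal.ofReal ‖T ∘L T‖ * ENNReal.ofReal (‖χ (P (b j))‖ ^ 2) := by
        refine ENNReal.tsum_le_tsum fun j => ?_
        rw [← ENNReal.ofReal_mul (norm_nonneg _)]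
        exact ENNReal.ofReal_le_ofReal (norm_apply_sq_le_norm_comp_self_mul hT _)
    _ = ENNReal.ofReal ‖T ∘L T‖ * ∑' j, ENNReal.ofReal (‖χ (P (b j))‖ ^ 2) :=
        ENNReal.tsum_mul_left

end ContinuousLinearMap

end HilbertSpace

section IndicatorOperator

variable {X H : Type*} [MeasurableSpace X] {μ : Measure X}
  [NormedAddCommGroup H] [InnerProductSpace ℝ H]

theorem MeasureTheory.L2.ofReal_norm_sq_eq_lintegral (f : Lp H 2 μ) :
    ENNReal.ofReal (‖f‖ ^ 2) = ∫⁻ x, ENNReal.ofReal (‖f x‖ ^ 2) ∂μ := by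
  have hInt : Integrable (fun x => ‖f x‖ ^ 2) μ := by
    simpa only [real_inner_self_eq_norm_sq] using L2.integrable_inner (𝕜 := ℝ) f f
  rw [← real_inner_self_eq_norm_sq, L2.inner_def]
  simp_rw [real_inner_self_eq_norm_sq]
  exact ofReal_integral_eq_lintegral_ofReal hInt (.of_forall fun _ => sq_nonneg _)

variable {Ω : Set X} {χ : Lp H 2 μ →L[ℝ] Lp H 2 μ}

theorem comp_self_eq_of_ae_eq_indicator (hχ : ∀ f, ⇑(χ f) =ᵐ[μ] Ω.indicator f) : χ ∘L χ = χ := by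
  ext1 f
  refine Lp.ext ((hχ (χ f)).trans ?_)
  filter_upwards [hχ f] with x hx
  by_cases hxΩ : x ∈ Ω <;> simp [hxΩ, hx]

theorem ofReal_norm_sq_eq_setLIntegral_of_ae_eq_indicator_s19 (hΩ : MeasurableSet Ω)
    (hχ : ∀ f, ⇑(χ f) =ᵐ[μ] Ω.indicator f) (f : Lp H 2 μ) :
    ENNReal.ofReal (‖χ f‖ ^ 2) = ∫⁻ x in Ω, ENNReal.ofReal (‖f x‖ ^ 2) ∂μ := by
  rw [L2.ofReal_norm_sq_eq_lintegral, ← lintegral_indicator hΩ]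
  refine lintegral_congr_ae ?_
  filter_upwards [hχ f] with x hx
  by_cases hxΩ : x ∈ Ω <;> simp [hxΩ, hx]

end IndicatorOperator

theorem MeasureTheory.tsum_setLIntegral_le_measure_mul_essSup {X ι : Type*} [MeasurableSpace X]
    [Countable ι] {μ : Measure X} (s : Set X) {g : ι → X → ℝ≥0∞}
    (hg : ∀ i, AEMeasurable (g i) (μ.restrict s)) :
    ∑' i, ∫⁻ x in s, g i x ∂μ ≤ μ s * essSup (fun x => ∑' i, g i x) μ := by
  rw [← lintegral_tsum hg, mul_comm, ← setLIntegral_const]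
  exact lintegral_mono_ae (ae_restrict_of_ae (ENNReal.ae_le_essSup _))

section Markov

variable {ι : Type*} (ν : ι → Measure ℝ)

theorem ofReal_mul_tsum_measure_Ioi_le (l : ℝ) :
    ENNReal.ofReal l * ∑' i, ν i (Ioi l) ≤ ∑' i, ∫⁻ x, ENNReal.ofReal x ∂ν i := by
  rw [← ENNReal.tsum_mul_left]
  refine ENNReal.tsum_le_tsum fun i => ?_
  calc ENNReal.ofReal l * ν i (Ioi l) = ∫⁻ _ in Ioi l, ENNReal.ofReal l ∂ν i :=
        (setLIntegral_const _ _).symm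
    _ ≤ ∫⁻ x in Ioi l, ENNReal.ofReal x ∂ν i :=
        setLIntegral_mono ENNReal.measurable_ofReal fun x hx => ENNReal.ofReal_le_ofReal hx.le
    _ ≤ ∫⁻ x, ENNReal.ofReal x ∂ν i := setLIntegral_le_lintegral _ _

theorem tsum_measure_Ioi_zero_eq_zero (h : ∑' i, ∫⁻ x, ENNReal.ofReal x ∂ν i = 0) :
    ∑' i, ν i (Ioi 0) = 0 := by
  refine ENNReal.tsum_eq_zero.mpr fun i => ?_
  have hae := (lintegral_eq_zero_iff ENNReal.measurable_ofReal).mp (ENNReal.tsum_eq_zero.mp h i)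
  refine measure_mono_null (fun x (hx : 0 < x) => ?_) (ae_iff.mp hae)
  simpa using hx

theorem four_mul_tsum_measure_Ioi_le {τ E : ℝ≥0∞}
    (hE : ∑' i, ∫⁻ x, ENNReal.ofReal x ∂ν i = E) (hτ : τ.toReal ≠ 0) (hE_top : E ≠ ⊤) :
    4 * ∑' i, ν i (Ioi (4 * (E.toReal / τ.toReal))) ≤ τ := by
  obtain ⟨hτ0, hτ_top⟩ := ENNReal.toReal_ne_zero.mp hτ
  rcases eq_or_ne E 0 with rfl | hE0
  · simp [tsum_measure_Ioi_zero_eq_zero ν hE]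
  set T := ∑' i, ν i (Ioi (4 * (E.toReal / τ.toReal)))
  have hl : ENNReal.ofReal (4 * (E.toReal / τ.toReal)) = 4 * E / τ := by
    rw [ENNReal.ofReal_mul zero_le_four,
      ENNReal.ofReal_div_of_pos (ENNReal.toReal_pos hτ0 hτ_top), ENNReal.ofReal_toReal hE_top,
      ENNReal.ofReal_toReal hτ_top, ENNReal.ofReal_ofNat, mul_div_assoc]
  have hMarkov := hE ▸ hl ▸ ofReal_mul_tsum_measure_Ioi_le ν (4 * (E.toReal / τ.toReal))
  refine (ENNReal.mul_le_mul_iff_right hE0 hE_top).mp ?_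
  calc E * (4 * T) = 4 * E / τ * T * τ := by
        rw [mul_right_comm, ENNReal.div_mul_cancel hτ0 hτ_top]; ring
    _ ≤ E * τ := by gcongr

theorem le_four_mul_tsum_measure_Iic {τ E : ℝ≥0∞} (hτ_eq : ∑' i, ν i univ = τ)
    (hE : ∑' i, ∫⁻ x, ENNReal.ofReal x ∂ν i = E) (hτ : τ.toReal ≠ 0) (hE_top : E ≠ ⊤) :
    τ ≤ 4 * ∑' i, ν i (Iic (4 * (E.toReal / τ.toReal))) := by
  set l := 4 * (E.toReal / τ.toReal)
  have hτ_top : τ ≠ ⊤ := (ENNReal.toReal_ne_zero.mp hτ).2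
  have hsplit : ∑' i, ν i (Iic l) + ∑' i, ν i (Ioi l) = τ := by
    rw [← ENNReal.tsum_add, ← hτ_eq]
    exact tsum_congr fun i => by
      rw [← measure_union (Iic_disjoint_Ioi le_rfl) measurableSet_Ioi, Iic_union_Ioi]
  have h3 : 3 * τ ≤ 4 * ∑' i, ν i (Iic l) := by
    refine (ENNReal.add_le_add_iff_right hτ_top).mp ?_
    calc 3 * τ + τ = 4 * ∑' i, ν i (Iic l) + 4 * ∑' i, ν i (Ioi l) := by
          rw [← mul_add, hsplit]; ring
      _ ≤ 4 * ∑' i, ν i (Iic l) + τ := by gcongr; exact four_mul_tsum_measure_Ioi_le ν hE hτ hE_top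
  exact le_trans (le_mul_of_one_le_left' (by norm_num)) h3

end Markov

theorem ENNReal.ofReal_toReal_div_le_of_le_mul {a b : ℝ≥0∞} {c : ℝ} (h : a ≤ ENNReal.ofReal c * b) :
    ENNReal.ofReal (a.toReal / c) ≤ b := by
  rcases le_or_gt c 0 with hc | hc
  · simp [ENNReal.ofReal_of_nonpos (div_nonpos_of_nonneg_of_nonpos ENNReal.toReal_nonneg hc)]
  rcases eq_or_ne a ⊤ with rfl | ha
  · simp
  rw [ENNReal.ofReal_div_of_pos hc, ENNReal.ofReal_toReal ha, mul_comm] at *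
  exact ENNReal.div_le_of_le_mul h

/-- `Pr λ` is the spectral projection `χ_A([0, λ])` and `ν g` the spectral measure of `A` in the
state `g`; traces are sums over the Hilbert basis `b`, and `R = ρ^{1/2}`. -/
theorem stmt_19_general {X : Type*} [MeasurableSpace X] (μ : Measure X)
    {H : Type*} [NormedAddCommGroup H] [InnerProductSpace ℝ H]
    {ι : Type*} [Countable ι] (b : HilbertBasis ι ℝ (Lp H 2 μ))
    (Pr : ℝ → (Lp H 2 μ →L[ℝ] Lp H 2 μ))
    (hproj : ∀ l, Pr l ∘L Pr l = Pr l)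
    (hsymm : ∀ l f g, ⟪Pr l f, g⟫_ℝ = ⟪f, Pr l g⟫_ℝ)
    (ν : Lp H 2 μ → Measure ℝ)
    (hν : ∀ g, ∀ l ≥ (0 : ℝ), ν g (Set.Iic l) = ENNReal.ofReal ⟪Pr l g, g⟫_ℝ)
    (hνtot : ∀ g, ν g Set.univ = ENNReal.ofReal (‖g‖ ^ 2))
    (FΩ Fd : ℝ → ℝ≥0∞) (Ω : Set X) (hΩmeas : MeasurableSet Ω)
    (hFΩ : ∀ l, FΩ l = ∑' i, ∫⁻ x in Ω, ENNReal.ofReal (‖(Pr l (b i) : Lp H 2 μ) x‖ ^ 2) ∂μ)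
    (hFd : ∀ l, Fd l
      = essSup (fun x => ∑' i, ENNReal.ofReal (‖(Pr l (b i) : Lp H 2 μ) x‖ ^ 2)) μ)
    (chi : Set X → (Lp H 2 μ →L[ℝ] Lp H 2 μ))
    (hchi : ∀ Ω' : Set X, MeasurableSet Ω' →
      ∀ f : Lp H 2 μ, ⇑(chi Ω' f) =ᵐ[μ] Ω'.indicator ⇑f)
    (ρ R : Lp H 2 μ →L[ℝ] Lp H 2 μ)
    (hRsymm : ∀ f g, ⟪R f, g⟫_ℝ = ⟪f, R g⟫_ℝ)
    (hR : R ∘L R = ρ)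
    (hsupp : chi Ω ∘L ρ ∘L chi Ω = ρ)
    (τρ Eρ : ℝ≥0∞)
    (hτρ : τρ = ∑' i, ENNReal.ofReal ⟪ρ (b i), b i⟫_ℝ)
    (hEρ : Eρ = ∑' i, ∫⁻ x, ENNReal.ofReal x ∂(ν (R (b i))))
    (hEρfin : Eρ ≠ ⊤) :
    ENNReal.ofReal (τρ.toReal / (4 * ‖ρ‖)) ≤ FΩ (4 * (Eρ.toReal / τρ.toReal)) ∧
      FΩ (4 * (Eρ.toReal / τρ.toReal)) ≤ μ Ω * Fd (4 * (Eρ.toReal / τρ.toReal)) := by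
  set l := 4 * (Eρ.toReal / τρ.toReal)
  refine ⟨?_, ?_⟩
  swap
  · rw [hFΩ, hFd]
    exact tsum_setLIntegral_le_measure_mul_essSup Ω fun i =>
      ENNReal.measurable_ofReal.comp_aemeasurable
        ((Lp.aestronglyMeasurable _).restrict.norm.aemeasurable.pow_const 2)
  by_cases hτ : τρ.toReal = 0
  · simp [hτ]
  have hRχ : R ∘L chi Ω = R := ContinuousLinearMap.comp_eq_self_of_comp_sq_comp_eq hRsymm
    (comp_self_eq_of_ae_eq_indicator (hchi Ω hΩmeas)) (by rw [hR, hsupp])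
  have hτν : ∑' i, ν (R (b i)) univ = τρ := by
    simp_rw [hτρ, hνtot, ← hR, ContinuousLinearMap.comp_apply,
      ContinuousLinearMap.inner_apply_apply_self_of_isSymmetric hRsymm]
  have hS : ∑' i, ν (R (b i)) (Iic l) ≤ ENNReal.ofReal ‖ρ‖ * FΩ l :=
    calc ∑' i, ν (R (b i)) (Iic l) = ∑' i, ENNReal.ofReal (‖Pr l (R (b i))‖ ^ 2) := by
          simp_rw [hν _ l (by positivity),
            ContinuousLinearMap.inner_apply_self_eq_norm_sq_of_comp_self (hsymm l) (hproj l)]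
      _ ≤ ENNReal.ofReal ‖ρ‖ * ∑' j, ENNReal.ofReal (‖chi Ω (Pr l (b j))‖ ^ 2) :=
          hR ▸ ContinuousLinearMap.tsum_ofReal_norm_sq_apply_apply_le b (hsymm l) hRsymm hRχ
      _ = ENNReal.ofReal ‖ρ‖ * FΩ l := by
          simp_rw [hFΩ, ofReal_norm_sq_eq_setLIntegral_of_ae_eq_indicator_s19 hΩmeas (hchi Ω hΩmeas)]
  refine ENNReal.ofReal_toReal_div_le_of_le_mul ?_
  calc τρ ≤ 4 * ∑' i, ν (R (b i)) (Iic l) :=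
        le_four_mul_tsum_measure_Iic _ hτν hEρ.symm hτ hEρfin
    _ ≤ 4 * (ENNReal.ofReal ‖ρ‖ * FΩ l) := by gcongr
    _ = ENNReal.ofReal (4 * ‖ρ‖) * FΩ l := by
        rw [ENNReal.ofReal_mul zero_le_four, ENNReal.ofReal_ofNat, mul_assoc]

/-- The global Faber–Krahn inequality for mixed states (Corollary 1.4,
inequality (18)).  The positive self-adjoint operator `A` on `L²(X,H)` is
encoded by its spectral projections `Pr l = χ_A([0,l])` and spectral measures
`ν g` of states.  For a Hilbert basis `(e_i)`, `F_Ω(λ) = τ(χ_Ω Π_{[0,λ]} χ_Ω)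
= Σ_i ∫_Ω ‖(Π_{[0,λ]} e_i)(x)‖² dμ` and `F(λ) = D(Π_{[0,λ]})` is the essential
supremum of the density function of `Π_{[0,λ]}`.  Let `ρ` be a nonzero positive
operator with positive square root `R`, supported in a domain `Ω` of finite
measure (`χ_Ω ρ χ_Ω = ρ`), with finite trace `τ(ρ) = Σ_i ⟨ρ e_i, e_i⟩`, finite
energy `E(ρ) = τ(ρ^{1/2} A ρ^{1/2}) = Σ_i ∫ x dν_{R e_i}` and expectation value
`⟨A⟩_ρ = E(ρ)/τ(ρ)`.  Then
`τ(ρ)/(4‖ρ‖₂,₂) ≤ F_Ω(4⟨A⟩_ρ) ≤ μ(Ω) F(4⟨A⟩_ρ)`. -/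
theorem stmt_19 {X : Type*} [MeasurableSpace X] (μ : Measure X) [SigmaFinite μ]
    {H : Type*} [NormedAddCommGroup H] [InnerProductSpace ℝ H] [CompleteSpace H]
    {ι : Type*} [Countable ι] (b : HilbertBasis ι ℝ (Lp H 2 μ))
    (Pr : ℝ → (Lp H 2 μ →L[ℝ] Lp H 2 μ))
    (hproj : ∀ l, Pr l ∘L Pr l = Pr l)
    (hsymm : ∀ l f g, ⟪Pr l f, g⟫_ℝ = ⟪f, Pr l g⟫_ℝ)
    (hmono : ∀ l l', l ≤ l' → Pr l' ∘L Pr l = Pr l)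
    (ν : Lp H 2 μ → Measure ℝ)
    (hν0 : ∀ g, ν g (Set.Iio 0) = 0)
    (hν : ∀ g, ∀ l ≥ (0 : ℝ), ν g (Set.Iic l) = ENNReal.ofReal ⟪Pr l g, g⟫_ℝ)
    (hνtot : ∀ g, ν g Set.univ = ENNReal.ofReal (‖g‖ ^ 2))
    (FΩ Fd : ℝ → ℝ≥0∞) (Ω : Set X) (hΩmeas : MeasurableSet Ω) (hΩfin : μ Ω ≠ ⊤)
    (hFΩ : ∀ l, FΩ l = ∑' i, ∫⁻ x in Ω, ENNReal.ofReal (‖(Pr l (b i) : Lp H 2 μ) x‖ ^ 2) ∂μ)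
    (hFd : ∀ l, Fd l
      = essSup (fun x => ∑' i, ENNReal.ofReal (‖(Pr l (b i) : Lp H 2 μ) x‖ ^ 2)) μ)
    (chi : Set X → (Lp H 2 μ →L[ℝ] Lp H 2 μ))
    (hchi : ∀ Ω' : Set X, MeasurableSet Ω' →
      ∀ f : Lp H 2 μ, ⇑(chi Ω' f) =ᵐ[μ] Ω'.indicator ⇑f)
    (ρ R : Lp H 2 μ →L[ℝ] Lp H 2 μ) (hρne : ρ ≠ 0)
    (hρsymm : ∀ f g, ⟪ρ f, g⟫_ℝ = ⟪f, ρ g⟫_ℝ)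
    (hρpos : ∀ f, 0 ≤ ⟪ρ f, f⟫_ℝ)
    (hRsymm : ∀ f g, ⟪R f, g⟫_ℝ = ⟪f, R g⟫_ℝ)
    (hRpos : ∀ f, 0 ≤ ⟪R f, f⟫_ℝ)
    (hR : R ∘L R = ρ)
    (hsupp : chi Ω ∘L ρ ∘L chi Ω = ρ)
    (τρ Eρ : ℝ≥0∞)
    (hτρ : τρ = ∑' i, ENNReal.ofReal ⟪ρ (b i), b i⟫_ℝ)
    (hτρfin : τρ ≠ ⊤)
    (hEρ : Eρ = ∑' i, ∫⁻ x, ENNReal.ofReal x ∂(ν (R (b i))))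
    (hEρfin : Eρ ≠ ⊤) :
    ENNReal.ofReal (τρ.toReal / (4 * ‖ρ‖)) ≤ FΩ (4 * (Eρ.toReal / τρ.toReal)) ∧
      FΩ (4 * (Eρ.toReal / τρ.toReal)) ≤ μ Ω * Fd (4 * (Eρ.toReal / τρ.toReal)) :=
  stmt_19_general μ b Pr hproj hsymm ν hν hνtot FΩ Fd Ω hΩmeas hFΩ hFd chi hchi ρ R hRsymm hR hsupp
    τρ Eρ hτρ hEρ hEρfin
end
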